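/- arXiv:2307.09439 — 8 statements merged into one kernel-verified Lean document; each statement's English description precedes it below -/
import Mathlib

section
/- Let χ = (P₁,P₂,P₃,P₄) be a polynomial vector field in ℝ⁴ with each Pᵢ of total degree at most 2. Then χ is a vector field on S¹×S² if and only if there exist constants k₃, k₄ ∈ ℝ and polynomials f, g ∈ ℝ[x₁,x₂,x₃,x₄] of degree at most 1 such that, setting K = k₃x₃ + k₄x₄: P₁ = (1/4)K·x₁ + f·x₂, P₂ = (1/4)K·x₂ − f·x₁, P₃ = (k₃/2)(−a²(x₁²+x₂²) + x₃² + x₄² + a⁴ − 1) + g·x₄, and P₄ = (k₄/2)(−a²(x₁²+x₂²) + x₃² + x₄² + a⁴ − 1) − g·x₃. Moreover, in this case χG_a = K·G_a, i.e., K is the cofactor of χ for S¹×S². -/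
open MvPolynomial

/-- The action of the polynomial vector field `χ = (P 0, P 1, P 2, P 3)` on a polynomial:
`χf = Σᵢ Pᵢ ∂f/∂xᵢ`. -/
noncomputable def chi (P : Fin 4 → MvPolynomial (Fin 4) ℝ)
    (f : MvPolynomial (Fin 4) ℝ) : MvPolynomial (Fin 4) ℝ :=
  ∑ i, P i * pderiv i f

/-- `G_a = (x₁² + x₂² - a²)² + x₃² + x₄² - 1`, whose zero set is `S¹ × S²`. -/
noncomputable def Ga (a : ℝ) : MvPolynomial (Fin 4) ℝ :=
  (X 0 ^ 2 + X 1 ^ 2 - C (a ^ 2)) ^ 2 + X 2 ^ 2 + X 3 ^ 2 - 1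

section helpers
open Finsupp
noncomputable def sgl (i j k l : ℕ) : Fin 4 →₀ ℕ :=
  Finsupp.single 0 i + Finsupp.single 1 j + Finsupp.single 2 k + Finsupp.single 3 l

lemma sgl_apply0 (i j k l : ℕ) : sgl i j k l 0 = i := by
  simp [sgl, Finsupp.single_apply]
lemma sgl_apply1 (i j k l : ℕ) : sgl i j k l 1 = j := by
  simp [sgl, Finsupp.single_apply]
lemma sgl_apply2 (i j k l : ℕ) : sgl i j k l 2 = k := by
  simp [sgl, Finsupp.single_apply]
lemma sgl_apply3 (i j k l : ℕ) : sgl i j k l 3 = l := by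
  simp [sgl, Finsupp.single_apply]

lemma eq_sgl (m : Fin 4 →₀ ℕ) : m = sgl (m 0) (m 1) (m 2) (m 3) := by
  ext i
  fin_cases i
  · exact (sgl_apply0 _ _ _ _).symm
  · exact (sgl_apply1 _ _ _ _).symm
  · exact (sgl_apply2 _ _ _ _).symm
  · exact (sgl_apply3 _ _ _ _).symm

lemma sgl_eq_iff {i j k l I J K L : ℕ} :
    sgl i j k l = sgl I J K L ↔ (i = I ∧ j = J ∧ k = K ∧ l = L) := by
  constructor
  · intro h
    refine ⟨?_, ?_, ?_, ?_⟩
    · have := DFunLike.congr_fun h 0; simpa [sgl_apply0] using this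
    · have := DFunLike.congr_fun h 1; simpa [sgl_apply1] using this
    · have := DFunLike.congr_fun h 2; simpa [sgl_apply2] using this
    · have := DFunLike.congr_fun h 3; simpa [sgl_apply3] using this
  · rintro ⟨rfl, rfl, rfl, rfl⟩; rfl

lemma sgl_le_iff {i j k l : ℕ} {m : Fin 4 →₀ ℕ} :
    sgl i j k l ≤ m ↔ (i ≤ m 0 ∧ j ≤ m 1 ∧ k ≤ m 2 ∧ l ≤ m 3) := by
  rw [Finsupp.le_def]
  constructor
  · intro h
    exact ⟨by simpa [sgl_apply0] using h 0, by simpa [sgl_apply1] using h 1,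
      by simpa [sgl_apply2] using h 2, by simpa [sgl_apply3] using h 3⟩
  · rintro ⟨h0, h1, h2, h3⟩ i
    fin_cases i
    · simpa [sgl_apply0] using h0
    · simpa [sgl_apply1] using h1
    · simpa [sgl_apply2] using h2
    · simpa [sgl_apply3] using h3

lemma sub_sgl_apply (m : Fin 4 →₀ ℕ) (i j k l : ℕ) (t : Fin 4) :
    (m - sgl i j k l) t = m t - (sgl i j k l) t := by
  simp [Finsupp.tsub_apply]

/-- degree sum function -/
def d4 (m : Fin 4 →₀ ℕ) : ℕ := m 0 + m 1 + m 2 + m 3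

lemma d4_sgl (i j k l : ℕ) : d4 (sgl i j k l) = i + j + k + l := by
  simp [d4, sgl_apply0, sgl_apply1, sgl_apply2, sgl_apply3]

lemma sum_support_eq_d4 (m : Fin 4 →₀ ℕ) : (∑ i ∈ m.support, m i) = d4 m := by
  rw [Finset.sum_subset (Finset.subset_univ m.support)
    (by intro x _ hx; simpa using (Finsupp.notMem_support_iff.mp hx))]
  rw [Fin.sum_univ_four]; rfl

lemma coeff_zero_of_d4 {p : MvPolynomial (Fin 4) ℝ} {n : ℕ} (hp : p.totalDegree ≤ n)
    {m : Fin 4 →₀ ℕ} (h : n < d4 m) : coeff m p = 0 := by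
  apply coeff_eq_zero_of_totalDegree_lt
  rw [sum_support_eq_d4]
  omega

lemma term_eq_monomial (c : ℝ) (i j k l : ℕ) :
    (C c * X 0 ^ i * X 1 ^ j * X 2 ^ k * X 3 ^ l : MvPolynomial (Fin 4) ℝ)
      = monomial (sgl i j k l) c := by
  rw [X_pow_eq_monomial, X_pow_eq_monomial, X_pow_eq_monomial, X_pow_eq_monomial,
    C_mul_monomial, monomial_mul, monomial_mul, monomial_mul, mul_one, mul_one, mul_one, mul_one, sgl]

lemma coeff_term (c : ℝ) (i j k l : ℕ) (m : Fin 4 →₀ ℕ) :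
    coeff m (C c * X 0 ^ i * X 1 ^ j * X 2 ^ k * X 3 ^ l : MvPolynomial (Fin 4) ℝ)
      = if sgl i j k l = m then c else 0 := by
  rw [term_eq_monomial, coeff_monomial]

lemma coeff_mul_term (p : MvPolynomial (Fin 4) ℝ) (c : ℝ) (i j k l : ℕ) (m : Fin 4 →₀ ℕ) :
    coeff m (p * (C c * X 0 ^ i * X 1 ^ j * X 2 ^ k * X 3 ^ l))
      = if i ≤ m 0 ∧ j ≤ m 1 ∧ k ≤ m 2 ∧ l ≤ m 3 then coeff (m - sgl i j k l) p * c else 0 := by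
  rw [term_eq_monomial, coeff_mul_monomial']
  by_cases h : sgl i j k l ≤ m
  · rw [if_pos h, if_pos (sgl_le_iff.mp h)]
  · rw [if_neg h, if_neg (fun hc => h (sgl_le_iff.mpr hc))]

set_option maxHeartbeats 2000000 in
lemma expand2 (p : MvPolynomial (Fin 4) ℝ) (hp : ∀ m : Fin 4 →₀ ℕ, 2 < d4 m → coeff m p = 0) :
    p = C (coeff (sgl 0 0 0 0) p) * X 0 ^ 0 * X 1 ^ 0 * X 2 ^ 0 * X 3 ^ 0 +
      C (coeff (sgl 1 0 0 0) p) * X 0 ^ 1 * X 1 ^ 0 * X 2 ^ 0 * X 3 ^ 0 +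
      C (coeff (sgl 0 1 0 0) p) * X 0 ^ 0 * X 1 ^ 1 * X 2 ^ 0 * X 3 ^ 0 +
      C (coeff (sgl 0 0 1 0) p) * X 0 ^ 0 * X 1 ^ 0 * X 2 ^ 1 * X 3 ^ 0 +
      C (coeff (sgl 0 0 0 1) p) * X 0 ^ 0 * X 1 ^ 0 * X 2 ^ 0 * X 3 ^ 1 +
      C (coeff (sgl 2 0 0 0) p) * X 0 ^ 2 * X 1 ^ 0 * X 2 ^ 0 * X 3 ^ 0 +
      C (coeff (sgl 1 1 0 0) p) * X 0 ^ 1 * X 1 ^ 1 * X 2 ^ 0 * X 3 ^ 0 +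
      C (coeff (sgl 1 0 1 0) p) * X 0 ^ 1 * X 1 ^ 0 * X 2 ^ 1 * X 3 ^ 0 +
      C (coeff (sgl 1 0 0 1) p) * X 0 ^ 1 * X 1 ^ 0 * X 2 ^ 0 * X 3 ^ 1 +
      C (coeff (sgl 0 2 0 0) p) * X 0 ^ 0 * X 1 ^ 2 * X 2 ^ 0 * X 3 ^ 0 +
      C (coeff (sgl 0 1 1 0) p) * X 0 ^ 0 * X 1 ^ 1 * X 2 ^ 1 * X 3 ^ 0 +
      C (coeff (sgl 0 1 0 1) p) * X 0 ^ 0 * X 1 ^ 1 * X 2 ^ 0 * X 3 ^ 1 +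
      C (coeff (sgl 0 0 2 0) p) * X 0 ^ 0 * X 1 ^ 0 * X 2 ^ 2 * X 3 ^ 0 +
      C (coeff (sgl 0 0 1 1) p) * X 0 ^ 0 * X 1 ^ 0 * X 2 ^ 1 * X 3 ^ 1 +
      C (coeff (sgl 0 0 0 2) p) * X 0 ^ 0 * X 1 ^ 0 * X 2 ^ 0 * X 3 ^ 2 := by
  apply MvPolynomial.ext
  intro m
  obtain ⟨i0, j0, k0, l0, rfl⟩ : ∃ i j k l, m = sgl i j k l := ⟨_, _, _, _, eq_sgl m⟩
  simp only [coeff_add, coeff_term, sgl_eq_iff]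
  by_cases h : i0 + j0 + k0 + l0 ≤ 2
  · have h0 : i0 ≤ 2 := by omega
    have h1 : j0 ≤ 2 := by omega
    have h2 : k0 ≤ 2 := by omega
    have h3 : l0 ≤ 2 := by omega
    interval_cases i0 <;> interval_cases j0 <;> interval_cases k0 <;> interval_cases l0 <;>
      first
      | (exfalso; omega)
      | norm_num
  · rw [hp _ (by rw [d4_sgl]; omega)]
    repeat' rw [if_neg (by omega)]
    norm_num


lemma pd_simp (a : ℝ) :
    (pderiv 0) (Ga a) = C (4:ℝ) * X 0 ^ 3 * X 1 ^ 0 * X 2 ^ 0 * X 3 ^ 0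
      + C (4:ℝ) * X 0 ^ 1 * X 1 ^ 2 * X 2 ^ 0 * X 3 ^ 0
      + C (-(4*a^2)) * X 0 ^ 1 * X 1 ^ 0 * X 2 ^ 0 * X 3 ^ 0 ∧
    (pderiv 1) (Ga a) = C (4:ℝ) * X 0 ^ 0 * X 1 ^ 3 * X 2 ^ 0 * X 3 ^ 0
      + C (4:ℝ) * X 0 ^ 2 * X 1 ^ 1 * X 2 ^ 0 * X 3 ^ 0
      + C (-(4*a^2)) * X 0 ^ 0 * X 1 ^ 1 * X 2 ^ 0 * X 3 ^ 0 ∧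
    (pderiv 2) (Ga a) = C (2:ℝ) * X 0 ^ 0 * X 1 ^ 0 * X 2 ^ 1 * X 3 ^ 0 ∧
    (pderiv 3) (Ga a) = C (2:ℝ) * X 0 ^ 0 * X 1 ^ 0 * X 2 ^ 0 * X 3 ^ 1 := by
  refine ⟨?_, ?_, ?_, ?_⟩ <;>
  · simp only [Ga, map_sub, map_add, pderiv_pow, pderiv_X_self, map_ofNat,
      pderiv_X_of_ne (by decide : (0:Fin 4) ≠ 1), pderiv_X_of_ne (by decide : (1:Fin 4) ≠ 0),
      pderiv_X_of_ne (by decide : (0:Fin 4) ≠ 2), pderiv_X_of_ne (by decide : (2:Fin 4) ≠ 0),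
      pderiv_X_of_ne (by decide : (0:Fin 4) ≠ 3), pderiv_X_of_ne (by decide : (3:Fin 4) ≠ 0),
      pderiv_X_of_ne (by decide : (1:Fin 4) ≠ 2), pderiv_X_of_ne (by decide : (2:Fin 4) ≠ 1),
      pderiv_X_of_ne (by decide : (1:Fin 4) ≠ 3), pderiv_X_of_ne (by decide : (3:Fin 4) ≠ 1),
      pderiv_X_of_ne (by decide : (2:Fin 4) ≠ 3), pderiv_X_of_ne (by decide : (3:Fin 4) ≠ 2),
      pderiv_C, pderiv_one]
    try simp only [map_neg, C_mul, map_ofNat]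
    ring

lemma Ga_eq (a : ℝ) : Ga a =
    C (1:ℝ) * X 0 ^ 4 * X 1 ^ 0 * X 2 ^ 0 * X 3 ^ 0
      + C (2:ℝ) * X 0 ^ 2 * X 1 ^ 2 * X 2 ^ 0 * X 3 ^ 0
      + C (1:ℝ) * X 0 ^ 0 * X 1 ^ 4 * X 2 ^ 0 * X 3 ^ 0
      + C (-(2*a^2)) * X 0 ^ 2 * X 1 ^ 0 * X 2 ^ 0 * X 3 ^ 0
      + C (-(2*a^2)) * X 0 ^ 0 * X 1 ^ 2 * X 2 ^ 0 * X 3 ^ 0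
      + C (1:ℝ) * X 0 ^ 0 * X 1 ^ 0 * X 2 ^ 2 * X 3 ^ 0
      + C (1:ℝ) * X 0 ^ 0 * X 1 ^ 0 * X 2 ^ 0 * X 3 ^ 2
      + C (a^4-1) * X 0 ^ 0 * X 1 ^ 0 * X 2 ^ 0 * X 3 ^ 0 := by
  unfold Ga
  simp only [map_sub, map_pow, map_one, map_neg, C_mul, map_ofNat]
  ring

lemma chi_eq (a : ℝ) (P : Fin 4 → MvPolynomial (Fin 4) ℝ) : chi P (Ga a) =
    P 0 * (C (4:ℝ) * X 0 ^ 3 * X 1 ^ 0 * X 2 ^ 0 * X 3 ^ 0)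
      + P 0 * (C (4:ℝ) * X 0 ^ 1 * X 1 ^ 2 * X 2 ^ 0 * X 3 ^ 0)
      + P 0 * (C (-(4*a^2)) * X 0 ^ 1 * X 1 ^ 0 * X 2 ^ 0 * X 3 ^ 0)
      + P 1 * (C (4:ℝ) * X 0 ^ 0 * X 1 ^ 3 * X 2 ^ 0 * X 3 ^ 0)
      + P 1 * (C (4:ℝ) * X 0 ^ 2 * X 1 ^ 1 * X 2 ^ 0 * X 3 ^ 0)
      + P 1 * (C (-(4*a^2)) * X 0 ^ 0 * X 1 ^ 1 * X 2 ^ 0 * X 3 ^ 0)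
      + P 2 * (C (2:ℝ) * X 0 ^ 0 * X 1 ^ 0 * X 2 ^ 1 * X 3 ^ 0)
      + P 3 * (C (2:ℝ) * X 0 ^ 0 * X 1 ^ 0 * X 2 ^ 0 * X 3 ^ 1) := by
  unfold chi
  rw [Fin.sum_univ_four, (pd_simp a).1, (pd_simp a).2.1, (pd_simp a).2.2.1, (pd_simp a).2.2.2]
  ring

lemma d4_def (m : Fin 4 →₀ ℕ) : d4 m = m 0 + m 1 + m 2 + m 3 := rfl

lemma le_d4₀ (m : Fin 4 →₀ ℕ) : m 0 ≤ d4 m := by rw [d4_def]; omega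

lemma d4_sub_lower (m s : Fin 4 →₀ ℕ) : d4 m - d4 s ≤ d4 (m - s) := by
  simp only [d4_def, Finsupp.tsub_apply]; omega

lemma d4_add (m s : Fin 4 →₀ ℕ) : d4 (m + s) = d4 m + d4 s := by
  simp only [d4_def, Finsupp.add_apply]; omega

lemma addsub_apply (m : Fin 4 →₀ ℕ) (i j k l I J Kk L : ℕ) (t : Fin 4) :
    (m + sgl i j k l - sgl I J Kk L) t = m t + (sgl i j k l) t - (sgl I J Kk L) t := by
  simp [Finsupp.tsub_apply, Finsupp.add_apply]

lemma sgl_sub_sgl (I J Kk L i j k l : ℕ) :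
    sgl I J Kk L - sgl i j k l = sgl (I - i) (J - j) (Kk - k) (L - l) := by
  ext t
  rw [Finsupp.tsub_apply]
  fin_cases t <;> simp [sgl, Finsupp.single_apply]

lemma deg1_le (c0 c1 c2 c3 c4 : ℝ) :
    (C c0 + C c1 * X 0 + C c2 * X 1 + C c3 * X 2 + C c4 * X 3 :
      MvPolynomial (Fin 4) ℝ).totalDegree ≤ 1 := by
  have h : ∀ (c : ℝ) (i : Fin 4), (C c * X i : MvPolynomial (Fin 4) ℝ).totalDegree ≤ 1 :=
    fun c i => (totalDegree_mul _ _).trans (by simp [totalDegree_C, totalDegree_X])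
  refine (totalDegree_add _ _).trans (max_le ((totalDegree_add _ _).trans
    (max_le ((totalDegree_add _ _).trans (max_le ((totalDegree_add _ _).trans
    (max_le (by simp [totalDegree_C]) (h _ _))) (h _ _))) (h _ _))) (h _ _))
end helpers

set_option maxHeartbeats 1600000 in
theorem stmt_1 (a : ℝ) (ha : 1 < a) (P : Fin 4 → MvPolynomial (Fin 4) ℝ)
    (hdeg : ∀ i, (P i).totalDegree ≤ 2) :
    (∃ K : MvPolynomial (Fin 4) ℝ, chi P (Ga a) = K * Ga a) ↔
      ∃ (k₃ k₄ : ℝ) (f g : MvPolynomial (Fin 4) ℝ),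
        f.totalDegree ≤ 1 ∧ g.totalDegree ≤ 1 ∧
        P 0 = C (1 / 4 : ℝ) * (C k₃ * X 2 + C k₄ * X 3) * X 0 + f * X 1 ∧
        P 1 = C (1 / 4 : ℝ) * (C k₃ * X 2 + C k₄ * X 3) * X 1 - f * X 0 ∧
        P 2 = C (k₃ / 2) *
            (-C (a ^ 2) * (X 0 ^ 2 + X 1 ^ 2) + X 2 ^ 2 + X 3 ^ 2 + C (a ^ 4 - 1)) +
            g * X 3 ∧
        P 3 = C (k₄ / 2) *
            (-C (a ^ 2) * (X 0 ^ 2 + X 1 ^ 2) + X 2 ^ 2 + X 3 ^ 2 + C (a ^ 4 - 1)) -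
            g * X 2 ∧
        chi P (Ga a) = (C k₃ * X 2 + C k₄ * X 3) * Ga a := by
  constructor
  · rintro ⟨K, E⟩
    have ha0 : (0:ℝ) < a := lt_trans zero_lt_one ha
    have ha2 : (1:ℝ) < a ^ 2 := by nlinarith
    have ha4 : (1:ℝ) < a ^ 4 := by nlinarith
    have hDa2 : (a:ℝ) ^ 2 ≠ 0 := (pow_pos ha0 2).ne'
    have hDa41 : a ^ 4 - 1 ≠ 0 := sub_ne_zero.mpr (ne_of_gt ha4)
    have hDprod : a ^ 2 * (a ^ 4 - 1) ≠ 0 := mul_ne_zero hDa2 hDa41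
    have hchi : ∀ m : Fin 4 →₀ ℕ, 6 ≤ d4 m → coeff m (chi P (Ga a)) = 0 := by
      intro m hm
      rw [chi_eq]
      have z : ∀ (i' : Fin 4) (i j k l : ℕ), i + j + k + l ≤ 3 → coeff (m - sgl i j k l) (P i') = 0 := by
        intro i' i j k l h
        refine coeff_zero_of_d4 (hdeg i') ?_
        have := d4_sub_lower m (sgl i j k l)
        rw [d4_sgl] at this; omega
      simp only [coeff_add, coeff_mul_term, z 0 3 0 0 0 (by norm_num), z 0 1 2 0 0 (by norm_num),
        z 0 1 0 0 0 (by norm_num), z 1 0 3 0 0 (by norm_num), z 1 2 1 0 0 (by norm_num),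
        z 1 0 1 0 0 (by norm_num), z 2 0 0 1 0 (by norm_num), z 3 0 0 0 1 (by norm_num),
        zero_mul, mul_zero, ite_self, add_zero, zero_add]
    have step : ∀ m : Fin 4 →₀ ℕ, 2 ≤ d4 m →
        (∀ m' : Fin 4 →₀ ℕ, 2 ≤ d4 m' → d4 m < d4 m' → coeff m' K = 0) →
        (∀ m' : Fin 4 →₀ ℕ, d4 m' = d4 m → m 0 + 2 ≤ m' 0 → coeff m' K = 0) →
        coeff m K = 0 := by
      intro m h2 hhigh hsame
      have hmu := congrArg (coeff (m + sgl 4 0 0 0)) E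
      rw [hchi _ (by rw [d4_add, d4_sgl]; omega), Ga_eq] at hmu
      have zk : ∀ (i j k l : ℕ), 1 ≤ i + j + k + l → i + j + k + l ≤ 2 →
          coeff (m + sgl 4 0 0 0 - sgl i j k l) K = 0 := by
        intro i j k l h1 h2'
        have hb := d4_sub_lower (m + sgl 4 0 0 0) (sgl i j k l)
        rw [d4_add, d4_sgl, d4_sgl] at hb
        exact hhigh _ (by omega) (by omega)
      have zk5 : coeff (m + sgl 4 0 0 0 - sgl 0 0 0 0) K = 0 := by
        have hb := d4_sub_lower (m + sgl 4 0 0 0) (sgl 0 0 0 0)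
        rw [d4_add, d4_sgl, d4_sgl] at hb
        exact hhigh _ (by omega) (by omega)
      have c24 : 2 ≤ m 0 + 4 := by omega
      simp only [mul_add, coeff_add, coeff_mul_term, Finsupp.add_apply, sgl_apply0, sgl_apply1,
        sgl_apply2, sgl_apply3, add_zero, Nat.le_add_left, zero_le, true_and, and_true, if_true,
        c24, zk 2 0 0 0 (by norm_num) (by norm_num), zk 0 2 0 0 (by norm_num) (by norm_num),
        zk 0 0 2 0 (by norm_num) (by norm_num), zk 0 0 0 2 (by norm_num) (by norm_num), zk5,
        add_tsub_cancel_right, zero_mul, mul_zero, ite_self, zero_add, mul_one] at hmu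
      by_cases hA : 2 ≤ m 1
      · have zA : coeff (m + sgl 4 0 0 0 - sgl 2 2 0 0) K = 0 :=
          hsame _ (by simp only [d4_def, addsub_apply, sgl_apply0, sgl_apply1, sgl_apply2,
              sgl_apply3]; omega)
            (by simp only [addsub_apply, sgl_apply0]; omega)
        by_cases hB : 4 ≤ m 1
        · have zB : coeff (m + sgl 4 0 0 0 - sgl 0 4 0 0) K = 0 :=
            hsame _ (by simp only [d4_def, addsub_apply, sgl_apply0, sgl_apply1, sgl_apply2,
                sgl_apply3]; omega)
              (by simp only [addsub_apply, sgl_apply0]; omega)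
          rw [if_pos hA, if_pos hB, zA, zB] at hmu
          linarith
        · rw [if_pos hA, if_neg hB, zA] at hmu
          linarith
      · rw [if_neg hA, if_neg (by omega : ¬ 4 ≤ m 1)] at hmu
        linarith
    have hKz : ∀ m : Fin 4 →₀ ℕ, 2 ≤ d4 m → coeff m K = 0 := by
      have outer : ∀ (s : ℕ) (m : Fin 4 →₀ ℕ), 2 ≤ d4 m → K.totalDegree < d4 m + s →
          coeff m K = 0 := by
        intro s
        induction s with
        | zero =>
          intro m h2 hd
          exact coeff_zero_of_d4 le_rfl (by omega)
        | succ s ih =>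
          have inner : ∀ (t : ℕ) (m : Fin 4 →₀ ℕ), 2 ≤ d4 m → K.totalDegree < d4 m + (s + 1) →
              d4 m ≤ m 0 + t → coeff m K = 0 := by
            intro t
            induction t with
            | zero =>
              intro m h2 hdk h0
              exact step m h2 (fun m' a b => ih m' a (by omega))
                (fun m' hd hge => False.elim (by have := le_d4₀ m'; omega))
            | succ t iht =>
              intro m h2 hdk hle
              exact step m h2 (fun m' a b => ih m' a (by omega))
                (fun m' hd hge => iht m' (by omega) (by omega) (by have := le_d4₀ m'; omega))
          intro m h2 hdk
          exact inner (d4 m) m h2 hdk (by omega)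
      intro m h2
      exact outer (K.totalDegree + 1) m h2 (by omega)
    have hP3 : ∀ (i' : Fin 4) (I J Kk L : ℕ), 2 < I + J + Kk + L → coeff (sgl I J Kk L) (P i') = 0 :=
      fun i' I J Kk L h => coeff_zero_of_d4 (hdeg i') (by rw [d4_sgl]; omega)
    have hK2 : ∀ (I J Kk L : ℕ), 1 < I + J + Kk + L → coeff (sgl I J Kk L) K = 0 :=
      fun I J Kk L h => hKz _ (by rw [d4_sgl]; omega)
    have hm0000 := congrArg (coeff (sgl 0 0 0 0)) E
    rw [chi_eq, Ga_eq] at hm0000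
    simp only [mul_add, coeff_add, coeff_mul_term, sgl_apply0, sgl_apply1, sgl_apply2,
      sgl_apply3, sgl_sub_sgl] at hm0000
    simp [hP3, hK2, -mul_eq_zero, -zero_eq_mul] at hm0000
    have hq0000 : ((-1 : ℝ) * a ^ 4 + (1 : ℝ)) * coeff (sgl 0 0 0 0) K = 0 := by
      first
      | linear_combination hm0000
      | linear_combination -hm0000
    have hm0001 := congrArg (coeff (sgl 0 0 0 1)) E
    rw [chi_eq, Ga_eq] at hm0001
    simp only [mul_add, coeff_add, coeff_mul_term, sgl_apply0, sgl_apply1, sgl_apply2,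
      sgl_apply3, sgl_sub_sgl] at hm0001
    simp [hP3, hK2, -mul_eq_zero, -zero_eq_mul] at hm0001
    have hq0001 : ((-1 : ℝ) * a ^ 4 + (1 : ℝ)) * coeff (sgl 0 0 0 1) K + ((2 : ℝ)) * coeff (sgl 0 0 0 0) (P 3) = 0 := by
      first
      | linear_combination hm0001
      | linear_combination -hm0001
    have hm0010 := congrArg (coeff (sgl 0 0 1 0)) E
    rw [chi_eq, Ga_eq] at hm0010
    simp only [mul_add, coeff_add, coeff_mul_term, sgl_apply0, sgl_apply1, sgl_apply2,
      sgl_apply3, sgl_sub_sgl] at hm0010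
    simp [hP3, hK2, -mul_eq_zero, -zero_eq_mul] at hm0010
    have hq0010 : ((-1 : ℝ) * a ^ 4 + (1 : ℝ)) * coeff (sgl 0 0 1 0) K + ((2 : ℝ)) * coeff (sgl 0 0 0 0) (P 2) = 0 := by
      first
      | linear_combination hm0010
      | linear_combination -hm0010
    have hm0100 := congrArg (coeff (sgl 0 1 0 0)) E
    rw [chi_eq, Ga_eq] at hm0100
    simp only [mul_add, coeff_add, coeff_mul_term, sgl_apply0, sgl_apply1, sgl_apply2,
      sgl_apply3, sgl_sub_sgl] at hm0100
    simp [hP3, hK2, -mul_eq_zero, -zero_eq_mul] at hm0100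
    have hq0100 : ((-1 : ℝ) * a ^ 4 + (1 : ℝ)) * coeff (sgl 0 1 0 0) K + ((-4 : ℝ) * a ^ 2) * coeff (sgl 0 0 0 0) (P 1) = 0 := by
      first
      | linear_combination hm0100
      | linear_combination -hm0100
    have hm1000 := congrArg (coeff (sgl 1 0 0 0)) E
    rw [chi_eq, Ga_eq] at hm1000
    simp only [mul_add, coeff_add, coeff_mul_term, sgl_apply0, sgl_apply1, sgl_apply2,
      sgl_apply3, sgl_sub_sgl] at hm1000
    simp [hP3, hK2, -mul_eq_zero, -zero_eq_mul] at hm1000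
    have hq1000 : ((-1 : ℝ) * a ^ 4 + (1 : ℝ)) * coeff (sgl 1 0 0 0) K + ((-4 : ℝ) * a ^ 2) * coeff (sgl 0 0 0 0) (P 0) = 0 := by
      first
      | linear_combination hm1000
      | linear_combination -hm1000
    have hm0002 := congrArg (coeff (sgl 0 0 0 2)) E
    rw [chi_eq, Ga_eq] at hm0002
    simp only [mul_add, coeff_add, coeff_mul_term, sgl_apply0, sgl_apply1, sgl_apply2,
      sgl_apply3, sgl_sub_sgl] at hm0002
    simp [hP3, hK2, -mul_eq_zero, -zero_eq_mul] at hm0002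
    have hq0002 : ((-1 : ℝ)) * coeff (sgl 0 0 0 0) K + ((2 : ℝ)) * coeff (sgl 0 0 0 1) (P 3) = 0 := by
      first
      | linear_combination hm0002
      | linear_combination -hm0002
    have hm0011 := congrArg (coeff (sgl 0 0 1 1)) E
    rw [chi_eq, Ga_eq] at hm0011
    simp only [mul_add, coeff_add, coeff_mul_term, sgl_apply0, sgl_apply1, sgl_apply2,
      sgl_apply3, sgl_sub_sgl] at hm0011
    simp [hP3, hK2, -mul_eq_zero, -zero_eq_mul] at hm0011
    have hq0011 : ((2 : ℝ)) * coeff (sgl 0 0 0 1) (P 2) + ((2 : ℝ)) * coeff (sgl 0 0 1 0) (P 3) = 0 := by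
      first
      | linear_combination hm0011
      | linear_combination -hm0011
    have hm0020 := congrArg (coeff (sgl 0 0 2 0)) E
    rw [chi_eq, Ga_eq] at hm0020
    simp only [mul_add, coeff_add, coeff_mul_term, sgl_apply0, sgl_apply1, sgl_apply2,
      sgl_apply3, sgl_sub_sgl] at hm0020
    simp [hP3, hK2, -mul_eq_zero, -zero_eq_mul] at hm0020
    have hq0020 : ((-1 : ℝ)) * coeff (sgl 0 0 0 0) K + ((2 : ℝ)) * coeff (sgl 0 0 1 0) (P 2) = 0 := by
      first
      | linear_combination hm0020
      | linear_combination -hm0020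
    have hm0101 := congrArg (coeff (sgl 0 1 0 1)) E
    rw [chi_eq, Ga_eq] at hm0101
    simp only [mul_add, coeff_add, coeff_mul_term, sgl_apply0, sgl_apply1, sgl_apply2,
      sgl_apply3, sgl_sub_sgl] at hm0101
    simp [hP3, hK2, -mul_eq_zero, -zero_eq_mul] at hm0101
    have hq0101 : ((-4 : ℝ) * a ^ 2) * coeff (sgl 0 0 0 1) (P 1) + ((2 : ℝ)) * coeff (sgl 0 1 0 0) (P 3) = 0 := by
      first
      | linear_combination hm0101
      | linear_combination -hm0101
    have hm0110 := congrArg (coeff (sgl 0 1 1 0)) E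
    rw [chi_eq, Ga_eq] at hm0110
    simp only [mul_add, coeff_add, coeff_mul_term, sgl_apply0, sgl_apply1, sgl_apply2,
      sgl_apply3, sgl_sub_sgl] at hm0110
    simp [hP3, hK2, -mul_eq_zero, -zero_eq_mul] at hm0110
    have hq0110 : ((-4 : ℝ) * a ^ 2) * coeff (sgl 0 0 1 0) (P 1) + ((2 : ℝ)) * coeff (sgl 0 1 0 0) (P 2) = 0 := by
      first
      | linear_combination hm0110
      | linear_combination -hm0110
    have hm0200 := congrArg (coeff (sgl 0 2 0 0)) E
    rw [chi_eq, Ga_eq] at hm0200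
    simp only [mul_add, coeff_add, coeff_mul_term, sgl_apply0, sgl_apply1, sgl_apply2,
      sgl_apply3, sgl_sub_sgl] at hm0200
    simp [hP3, hK2, -mul_eq_zero, -zero_eq_mul] at hm0200
    have hq0200 : ((2 : ℝ) * a ^ 2) * coeff (sgl 0 0 0 0) K + ((-4 : ℝ) * a ^ 2) * coeff (sgl 0 1 0 0) (P 1) = 0 := by
      first
      | linear_combination hm0200
      | linear_combination -hm0200
    have hm1001 := congrArg (coeff (sgl 1 0 0 1)) E
    rw [chi_eq, Ga_eq] at hm1001
    simp only [mul_add, coeff_add, coeff_mul_term, sgl_apply0, sgl_apply1, sgl_apply2,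
      sgl_apply3, sgl_sub_sgl] at hm1001
    simp [hP3, hK2, -mul_eq_zero, -zero_eq_mul] at hm1001
    have hq1001 : ((-4 : ℝ) * a ^ 2) * coeff (sgl 0 0 0 1) (P 0) + ((2 : ℝ)) * coeff (sgl 1 0 0 0) (P 3) = 0 := by
      first
      | linear_combination hm1001
      | linear_combination -hm1001
    have hm1010 := congrArg (coeff (sgl 1 0 1 0)) E
    rw [chi_eq, Ga_eq] at hm1010
    simp only [mul_add, coeff_add, coeff_mul_term, sgl_apply0, sgl_apply1, sgl_apply2,
      sgl_apply3, sgl_sub_sgl] at hm1010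
    simp [hP3, hK2, -mul_eq_zero, -zero_eq_mul] at hm1010
    have hq1010 : ((-4 : ℝ) * a ^ 2) * coeff (sgl 0 0 1 0) (P 0) + ((2 : ℝ)) * coeff (sgl 1 0 0 0) (P 2) = 0 := by
      first
      | linear_combination hm1010
      | linear_combination -hm1010
    have hm1100 := congrArg (coeff (sgl 1 1 0 0)) E
    rw [chi_eq, Ga_eq] at hm1100
    simp only [mul_add, coeff_add, coeff_mul_term, sgl_apply0, sgl_apply1, sgl_apply2,
      sgl_apply3, sgl_sub_sgl] at hm1100
    simp [hP3, hK2, -mul_eq_zero, -zero_eq_mul] at hm1100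
    have hq1100 : ((-4 : ℝ) * a ^ 2) * coeff (sgl 0 1 0 0) (P 0) + ((-4 : ℝ) * a ^ 2) * coeff (sgl 1 0 0 0) (P 1) = 0 := by
      first
      | linear_combination hm1100
      | linear_combination -hm1100
    have hm2000 := congrArg (coeff (sgl 2 0 0 0)) E
    rw [chi_eq, Ga_eq] at hm2000
    simp only [mul_add, coeff_add, coeff_mul_term, sgl_apply0, sgl_apply1, sgl_apply2,
      sgl_apply3, sgl_sub_sgl] at hm2000
    simp [hP3, hK2, -mul_eq_zero, -zero_eq_mul] at hm2000
    have hq2000 : ((2 : ℝ) * a ^ 2) * coeff (sgl 0 0 0 0) K + ((-4 : ℝ) * a ^ 2) * coeff (sgl 1 0 0 0) (P 0) = 0 := by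
      first
      | linear_combination hm2000
      | linear_combination -hm2000
    have hm0003 := congrArg (coeff (sgl 0 0 0 3)) E
    rw [chi_eq, Ga_eq] at hm0003
    simp only [mul_add, coeff_add, coeff_mul_term, sgl_apply0, sgl_apply1, sgl_apply2,
      sgl_apply3, sgl_sub_sgl] at hm0003
    simp [hP3, hK2, -mul_eq_zero, -zero_eq_mul] at hm0003
    have hq0003 : ((-1 : ℝ)) * coeff (sgl 0 0 0 1) K + ((2 : ℝ)) * coeff (sgl 0 0 0 2) (P 3) = 0 := by
      first
      | linear_combination hm0003
      | linear_combination -hm0003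
    have hm0012 := congrArg (coeff (sgl 0 0 1 2)) E
    rw [chi_eq, Ga_eq] at hm0012
    simp only [mul_add, coeff_add, coeff_mul_term, sgl_apply0, sgl_apply1, sgl_apply2,
      sgl_apply3, sgl_sub_sgl] at hm0012
    simp [hP3, hK2, -mul_eq_zero, -zero_eq_mul] at hm0012
    have hq0012 : ((-1 : ℝ)) * coeff (sgl 0 0 1 0) K + ((2 : ℝ)) * coeff (sgl 0 0 0 2) (P 2) + ((2 : ℝ)) * coeff (sgl 0 0 1 1) (P 3) = 0 := by
      first
      | linear_combination hm0012
      | linear_combination -hm0012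
    have hm0021 := congrArg (coeff (sgl 0 0 2 1)) E
    rw [chi_eq, Ga_eq] at hm0021
    simp only [mul_add, coeff_add, coeff_mul_term, sgl_apply0, sgl_apply1, sgl_apply2,
      sgl_apply3, sgl_sub_sgl] at hm0021
    simp [hP3, hK2, -mul_eq_zero, -zero_eq_mul] at hm0021
    have hq0021 : ((-1 : ℝ)) * coeff (sgl 0 0 0 1) K + ((2 : ℝ)) * coeff (sgl 0 0 1 1) (P 2) + ((2 : ℝ)) * coeff (sgl 0 0 2 0) (P 3) = 0 := by
      first
      | linear_combination hm0021
      | linear_combination -hm0021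
    have hm0030 := congrArg (coeff (sgl 0 0 3 0)) E
    rw [chi_eq, Ga_eq] at hm0030
    simp only [mul_add, coeff_add, coeff_mul_term, sgl_apply0, sgl_apply1, sgl_apply2,
      sgl_apply3, sgl_sub_sgl] at hm0030
    simp [hP3, hK2, -mul_eq_zero, -zero_eq_mul] at hm0030
    have hq0030 : ((-1 : ℝ)) * coeff (sgl 0 0 1 0) K + ((2 : ℝ)) * coeff (sgl 0 0 2 0) (P 2) = 0 := by
      first
      | linear_combination hm0030
      | linear_combination -hm0030
    have hm0102 := congrArg (coeff (sgl 0 1 0 2)) E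
    rw [chi_eq, Ga_eq] at hm0102
    simp only [mul_add, coeff_add, coeff_mul_term, sgl_apply0, sgl_apply1, sgl_apply2,
      sgl_apply3, sgl_sub_sgl] at hm0102
    simp [hP3, hK2, -mul_eq_zero, -zero_eq_mul] at hm0102
    have hq0102 : ((-1 : ℝ)) * coeff (sgl 0 1 0 0) K + ((-4 : ℝ) * a ^ 2) * coeff (sgl 0 0 0 2) (P 1) + ((2 : ℝ)) * coeff (sgl 0 1 0 1) (P 3) = 0 := by
      first
      | linear_combination hm0102
      | linear_combination -hm0102
    have hm0111 := congrArg (coeff (sgl 0 1 1 1)) E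
    rw [chi_eq, Ga_eq] at hm0111
    simp only [mul_add, coeff_add, coeff_mul_term, sgl_apply0, sgl_apply1, sgl_apply2,
      sgl_apply3, sgl_sub_sgl] at hm0111
    simp [hP3, hK2, -mul_eq_zero, -zero_eq_mul] at hm0111
    have hq0111 : ((-4 : ℝ) * a ^ 2) * coeff (sgl 0 0 1 1) (P 1) + ((2 : ℝ)) * coeff (sgl 0 1 0 1) (P 2) + ((2 : ℝ)) * coeff (sgl 0 1 1 0) (P 3) = 0 := by
      first
      | linear_combination hm0111
      | linear_combination -hm0111
    have hm0120 := congrArg (coeff (sgl 0 1 2 0)) E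
    rw [chi_eq, Ga_eq] at hm0120
    simp only [mul_add, coeff_add, coeff_mul_term, sgl_apply0, sgl_apply1, sgl_apply2,
      sgl_apply3, sgl_sub_sgl] at hm0120
    simp [hP3, hK2, -mul_eq_zero, -zero_eq_mul] at hm0120
    have hq0120 : ((-1 : ℝ)) * coeff (sgl 0 1 0 0) K + ((-4 : ℝ) * a ^ 2) * coeff (sgl 0 0 2 0) (P 1) + ((2 : ℝ)) * coeff (sgl 0 1 1 0) (P 2) = 0 := by
      first
      | linear_combination hm0120
      | linear_combination -hm0120
    have hm0201 := congrArg (coeff (sgl 0 2 0 1)) E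
    rw [chi_eq, Ga_eq] at hm0201
    simp only [mul_add, coeff_add, coeff_mul_term, sgl_apply0, sgl_apply1, sgl_apply2,
      sgl_apply3, sgl_sub_sgl] at hm0201
    simp [hP3, hK2, -mul_eq_zero, -zero_eq_mul] at hm0201
    have hq0201 : ((2 : ℝ) * a ^ 2) * coeff (sgl 0 0 0 1) K + ((-4 : ℝ) * a ^ 2) * coeff (sgl 0 1 0 1) (P 1) + ((2 : ℝ)) * coeff (sgl 0 2 0 0) (P 3) = 0 := by
      first
      | linear_combination hm0201
      | linear_combination -hm0201
    have hm0210 := congrArg (coeff (sgl 0 2 1 0)) E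
    rw [chi_eq, Ga_eq] at hm0210
    simp only [mul_add, coeff_add, coeff_mul_term, sgl_apply0, sgl_apply1, sgl_apply2,
      sgl_apply3, sgl_sub_sgl] at hm0210
    simp [hP3, hK2, -mul_eq_zero, -zero_eq_mul] at hm0210
    have hq0210 : ((2 : ℝ) * a ^ 2) * coeff (sgl 0 0 1 0) K + ((-4 : ℝ) * a ^ 2) * coeff (sgl 0 1 1 0) (P 1) + ((2 : ℝ)) * coeff (sgl 0 2 0 0) (P 2) = 0 := by
      first
      | linear_combination hm0210
      | linear_combination -hm0210
    have hm0300 := congrArg (coeff (sgl 0 3 0 0)) E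
    rw [chi_eq, Ga_eq] at hm0300
    simp only [mul_add, coeff_add, coeff_mul_term, sgl_apply0, sgl_apply1, sgl_apply2,
      sgl_apply3, sgl_sub_sgl] at hm0300
    simp [hP3, hK2, -mul_eq_zero, -zero_eq_mul] at hm0300
    have hq0300 : ((2 : ℝ) * a ^ 2) * coeff (sgl 0 1 0 0) K + ((4 : ℝ)) * coeff (sgl 0 0 0 0) (P 1) + ((-4 : ℝ) * a ^ 2) * coeff (sgl 0 2 0 0) (P 1) = 0 := by
      first
      | linear_combination hm0300
      | linear_combination -hm0300
    have hm1002 := congrArg (coeff (sgl 1 0 0 2)) E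
    rw [chi_eq, Ga_eq] at hm1002
    simp only [mul_add, coeff_add, coeff_mul_term, sgl_apply0, sgl_apply1, sgl_apply2,
      sgl_apply3, sgl_sub_sgl] at hm1002
    simp [hP3, hK2, -mul_eq_zero, -zero_eq_mul] at hm1002
    have hq1002 : ((-1 : ℝ)) * coeff (sgl 1 0 0 0) K + ((-4 : ℝ) * a ^ 2) * coeff (sgl 0 0 0 2) (P 0) + ((2 : ℝ)) * coeff (sgl 1 0 0 1) (P 3) = 0 := by
      first
      | linear_combination hm1002
      | linear_combination -hm1002
    have hm1011 := congrArg (coeff (sgl 1 0 1 1)) E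
    rw [chi_eq, Ga_eq] at hm1011
    simp only [mul_add, coeff_add, coeff_mul_term, sgl_apply0, sgl_apply1, sgl_apply2,
      sgl_apply3, sgl_sub_sgl] at hm1011
    simp [hP3, hK2, -mul_eq_zero, -zero_eq_mul] at hm1011
    have hq1011 : ((-4 : ℝ) * a ^ 2) * coeff (sgl 0 0 1 1) (P 0) + ((2 : ℝ)) * coeff (sgl 1 0 0 1) (P 2) + ((2 : ℝ)) * coeff (sgl 1 0 1 0) (P 3) = 0 := by
      first
      | linear_combination hm1011
      | linear_combination -hm1011
    have hm1020 := congrArg (coeff (sgl 1 0 2 0)) E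
    rw [chi_eq, Ga_eq] at hm1020
    simp only [mul_add, coeff_add, coeff_mul_term, sgl_apply0, sgl_apply1, sgl_apply2,
      sgl_apply3, sgl_sub_sgl] at hm1020
    simp [hP3, hK2, -mul_eq_zero, -zero_eq_mul] at hm1020
    have hq1020 : ((-1 : ℝ)) * coeff (sgl 1 0 0 0) K + ((-4 : ℝ) * a ^ 2) * coeff (sgl 0 0 2 0) (P 0) + ((2 : ℝ)) * coeff (sgl 1 0 1 0) (P 2) = 0 := by
      first
      | linear_combination hm1020
      | linear_combination -hm1020
    have hm1101 := congrArg (coeff (sgl 1 1 0 1)) E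
    rw [chi_eq, Ga_eq] at hm1101
    simp only [mul_add, coeff_add, coeff_mul_term, sgl_apply0, sgl_apply1, sgl_apply2,
      sgl_apply3, sgl_sub_sgl] at hm1101
    simp [hP3, hK2, -mul_eq_zero, -zero_eq_mul] at hm1101
    have hq1101 : ((-4 : ℝ) * a ^ 2) * coeff (sgl 0 1 0 1) (P 0) + ((-4 : ℝ) * a ^ 2) * coeff (sgl 1 0 0 1) (P 1) + ((2 : ℝ)) * coeff (sgl 1 1 0 0) (P 3) = 0 := by
      first
      | linear_combination hm1101
      | linear_combination -hm1101
    have hm1110 := congrArg (coeff (sgl 1 1 1 0)) E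
    rw [chi_eq, Ga_eq] at hm1110
    simp only [mul_add, coeff_add, coeff_mul_term, sgl_apply0, sgl_apply1, sgl_apply2,
      sgl_apply3, sgl_sub_sgl] at hm1110
    simp [hP3, hK2, -mul_eq_zero, -zero_eq_mul] at hm1110
    have hq1110 : ((-4 : ℝ) * a ^ 2) * coeff (sgl 0 1 1 0) (P 0) + ((-4 : ℝ) * a ^ 2) * coeff (sgl 1 0 1 0) (P 1) + ((2 : ℝ)) * coeff (sgl 1 1 0 0) (P 2) = 0 := by
      first
      | linear_combination hm1110
      | linear_combination -hm1110
    have hm1200 := congrArg (coeff (sgl 1 2 0 0)) E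
    rw [chi_eq, Ga_eq] at hm1200
    simp only [mul_add, coeff_add, coeff_mul_term, sgl_apply0, sgl_apply1, sgl_apply2,
      sgl_apply3, sgl_sub_sgl] at hm1200
    simp [hP3, hK2, -mul_eq_zero, -zero_eq_mul] at hm1200
    have hq1200 : ((2 : ℝ) * a ^ 2) * coeff (sgl 1 0 0 0) K + ((4 : ℝ)) * coeff (sgl 0 0 0 0) (P 0) + ((-4 : ℝ) * a ^ 2) * coeff (sgl 0 2 0 0) (P 0) + ((-4 : ℝ) * a ^ 2) * coeff (sgl 1 1 0 0) (P 1) = 0 := by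
      first
      | linear_combination hm1200
      | linear_combination -hm1200
    have hm2001 := congrArg (coeff (sgl 2 0 0 1)) E
    rw [chi_eq, Ga_eq] at hm2001
    simp only [mul_add, coeff_add, coeff_mul_term, sgl_apply0, sgl_apply1, sgl_apply2,
      sgl_apply3, sgl_sub_sgl] at hm2001
    simp [hP3, hK2, -mul_eq_zero, -zero_eq_mul] at hm2001
    have hq2001 : ((2 : ℝ) * a ^ 2) * coeff (sgl 0 0 0 1) K + ((-4 : ℝ) * a ^ 2) * coeff (sgl 1 0 0 1) (P 0) + ((2 : ℝ)) * coeff (sgl 2 0 0 0) (P 3) = 0 := by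
      first
      | linear_combination hm2001
      | linear_combination -hm2001
    have hm2010 := congrArg (coeff (sgl 2 0 1 0)) E
    rw [chi_eq, Ga_eq] at hm2010
    simp only [mul_add, coeff_add, coeff_mul_term, sgl_apply0, sgl_apply1, sgl_apply2,
      sgl_apply3, sgl_sub_sgl] at hm2010
    simp [hP3, hK2, -mul_eq_zero, -zero_eq_mul] at hm2010
    have hq2010 : ((2 : ℝ) * a ^ 2) * coeff (sgl 0 0 1 0) K + ((-4 : ℝ) * a ^ 2) * coeff (sgl 1 0 1 0) (P 0) + ((2 : ℝ)) * coeff (sgl 2 0 0 0) (P 2) = 0 := by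
      first
      | linear_combination hm2010
      | linear_combination -hm2010
    have hm2100 := congrArg (coeff (sgl 2 1 0 0)) E
    rw [chi_eq, Ga_eq] at hm2100
    simp only [mul_add, coeff_add, coeff_mul_term, sgl_apply0, sgl_apply1, sgl_apply2,
      sgl_apply3, sgl_sub_sgl] at hm2100
    simp [hP3, hK2, -mul_eq_zero, -zero_eq_mul] at hm2100
    have hq2100 : ((2 : ℝ) * a ^ 2) * coeff (sgl 0 1 0 0) K + ((-4 : ℝ) * a ^ 2) * coeff (sgl 1 1 0 0) (P 0) + ((4 : ℝ)) * coeff (sgl 0 0 0 0) (P 1) + ((-4 : ℝ) * a ^ 2) * coeff (sgl 2 0 0 0) (P 1) = 0 := by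
      first
      | linear_combination hm2100
      | linear_combination -hm2100
    have hm3000 := congrArg (coeff (sgl 3 0 0 0)) E
    rw [chi_eq, Ga_eq] at hm3000
    simp only [mul_add, coeff_add, coeff_mul_term, sgl_apply0, sgl_apply1, sgl_apply2,
      sgl_apply3, sgl_sub_sgl] at hm3000
    simp [hP3, hK2, -mul_eq_zero, -zero_eq_mul] at hm3000
    have hq3000 : ((2 : ℝ) * a ^ 2) * coeff (sgl 1 0 0 0) K + ((4 : ℝ)) * coeff (sgl 0 0 0 0) (P 0) + ((-4 : ℝ) * a ^ 2) * coeff (sgl 2 0 0 0) (P 0) = 0 := by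
      first
      | linear_combination hm3000
      | linear_combination -hm3000
    have hm0301 := congrArg (coeff (sgl 0 3 0 1)) E
    rw [chi_eq, Ga_eq] at hm0301
    simp only [mul_add, coeff_add, coeff_mul_term, sgl_apply0, sgl_apply1, sgl_apply2,
      sgl_apply3, sgl_sub_sgl] at hm0301
    simp [hP3, hK2, -mul_eq_zero, -zero_eq_mul] at hm0301
    have hq0301 : ((4 : ℝ)) * coeff (sgl 0 0 0 1) (P 1) = 0 := by
      first
      | linear_combination hm0301
      | linear_combination -hm0301
    have hm0310 := congrArg (coeff (sgl 0 3 1 0)) E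
    rw [chi_eq, Ga_eq] at hm0310
    simp only [mul_add, coeff_add, coeff_mul_term, sgl_apply0, sgl_apply1, sgl_apply2,
      sgl_apply3, sgl_sub_sgl] at hm0310
    simp [hP3, hK2, -mul_eq_zero, -zero_eq_mul] at hm0310
    have hq0310 : ((4 : ℝ)) * coeff (sgl 0 0 1 0) (P 1) = 0 := by
      first
      | linear_combination hm0310
      | linear_combination -hm0310
    have hm1201 := congrArg (coeff (sgl 1 2 0 1)) E
    rw [chi_eq, Ga_eq] at hm1201
    simp only [mul_add, coeff_add, coeff_mul_term, sgl_apply0, sgl_apply1, sgl_apply2,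
      sgl_apply3, sgl_sub_sgl] at hm1201
    simp [hP3, hK2, -mul_eq_zero, -zero_eq_mul] at hm1201
    have hq1201 : ((4 : ℝ)) * coeff (sgl 0 0 0 1) (P 0) = 0 := by
      first
      | linear_combination hm1201
      | linear_combination -hm1201
    have hm1210 := congrArg (coeff (sgl 1 2 1 0)) E
    rw [chi_eq, Ga_eq] at hm1210
    simp only [mul_add, coeff_add, coeff_mul_term, sgl_apply0, sgl_apply1, sgl_apply2,
      sgl_apply3, sgl_sub_sgl] at hm1210
    simp [hP3, hK2, -mul_eq_zero, -zero_eq_mul] at hm1210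
    have hq1210 : ((4 : ℝ)) * coeff (sgl 0 0 1 0) (P 0) = 0 := by
      first
      | linear_combination hm1210
      | linear_combination -hm1210
    have hm0302 := congrArg (coeff (sgl 0 3 0 2)) E
    rw [chi_eq, Ga_eq] at hm0302
    simp only [mul_add, coeff_add, coeff_mul_term, sgl_apply0, sgl_apply1, sgl_apply2,
      sgl_apply3, sgl_sub_sgl] at hm0302
    simp [hP3, hK2, -mul_eq_zero, -zero_eq_mul] at hm0302
    have hq0302 : ((4 : ℝ)) * coeff (sgl 0 0 0 2) (P 1) = 0 := by
      first
      | linear_combination hm0302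
      | linear_combination -hm0302
    have hm0311 := congrArg (coeff (sgl 0 3 1 1)) E
    rw [chi_eq, Ga_eq] at hm0311
    simp only [mul_add, coeff_add, coeff_mul_term, sgl_apply0, sgl_apply1, sgl_apply2,
      sgl_apply3, sgl_sub_sgl] at hm0311
    simp [hP3, hK2, -mul_eq_zero, -zero_eq_mul] at hm0311
    have hq0311 : ((4 : ℝ)) * coeff (sgl 0 0 1 1) (P 1) = 0 := by
      first
      | linear_combination hm0311
      | linear_combination -hm0311
    have hm0320 := congrArg (coeff (sgl 0 3 2 0)) E
    rw [chi_eq, Ga_eq] at hm0320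
    simp only [mul_add, coeff_add, coeff_mul_term, sgl_apply0, sgl_apply1, sgl_apply2,
      sgl_apply3, sgl_sub_sgl] at hm0320
    simp [hP3, hK2, -mul_eq_zero, -zero_eq_mul] at hm0320
    have hq0320 : ((4 : ℝ)) * coeff (sgl 0 0 2 0) (P 1) = 0 := by
      first
      | linear_combination hm0320
      | linear_combination -hm0320
    have hm0401 := congrArg (coeff (sgl 0 4 0 1)) E
    rw [chi_eq, Ga_eq] at hm0401
    simp only [mul_add, coeff_add, coeff_mul_term, sgl_apply0, sgl_apply1, sgl_apply2,
      sgl_apply3, sgl_sub_sgl] at hm0401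
    simp [hP3, hK2, -mul_eq_zero, -zero_eq_mul] at hm0401
    have hq0401 : ((-1 : ℝ)) * coeff (sgl 0 0 0 1) K + ((4 : ℝ)) * coeff (sgl 0 1 0 1) (P 1) = 0 := by
      first
      | linear_combination hm0401
      | linear_combination -hm0401
    have hm0410 := congrArg (coeff (sgl 0 4 1 0)) E
    rw [chi_eq, Ga_eq] at hm0410
    simp only [mul_add, coeff_add, coeff_mul_term, sgl_apply0, sgl_apply1, sgl_apply2,
      sgl_apply3, sgl_sub_sgl] at hm0410
    simp [hP3, hK2, -mul_eq_zero, -zero_eq_mul] at hm0410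
    have hq0410 : ((-1 : ℝ)) * coeff (sgl 0 0 1 0) K + ((4 : ℝ)) * coeff (sgl 0 1 1 0) (P 1) = 0 := by
      first
      | linear_combination hm0410
      | linear_combination -hm0410
    have hm0500 := congrArg (coeff (sgl 0 5 0 0)) E
    rw [chi_eq, Ga_eq] at hm0500
    simp only [mul_add, coeff_add, coeff_mul_term, sgl_apply0, sgl_apply1, sgl_apply2,
      sgl_apply3, sgl_sub_sgl] at hm0500
    simp [hP3, hK2, -mul_eq_zero, -zero_eq_mul] at hm0500
    have hq0500 : ((-1 : ℝ)) * coeff (sgl 0 1 0 0) K + ((4 : ℝ)) * coeff (sgl 0 2 0 0) (P 1) = 0 := by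
      first
      | linear_combination hm0500
      | linear_combination -hm0500
    have hm1202 := congrArg (coeff (sgl 1 2 0 2)) E
    rw [chi_eq, Ga_eq] at hm1202
    simp only [mul_add, coeff_add, coeff_mul_term, sgl_apply0, sgl_apply1, sgl_apply2,
      sgl_apply3, sgl_sub_sgl] at hm1202
    simp [hP3, hK2, -mul_eq_zero, -zero_eq_mul] at hm1202
    have hq1202 : ((4 : ℝ)) * coeff (sgl 0 0 0 2) (P 0) = 0 := by
      first
      | linear_combination hm1202
      | linear_combination -hm1202
    have hm1211 := congrArg (coeff (sgl 1 2 1 1)) E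
    rw [chi_eq, Ga_eq] at hm1211
    simp only [mul_add, coeff_add, coeff_mul_term, sgl_apply0, sgl_apply1, sgl_apply2,
      sgl_apply3, sgl_sub_sgl] at hm1211
    simp [hP3, hK2, -mul_eq_zero, -zero_eq_mul] at hm1211
    have hq1211 : ((4 : ℝ)) * coeff (sgl 0 0 1 1) (P 0) = 0 := by
      first
      | linear_combination hm1211
      | linear_combination -hm1211
    have hm1220 := congrArg (coeff (sgl 1 2 2 0)) E
    rw [chi_eq, Ga_eq] at hm1220
    simp only [mul_add, coeff_add, coeff_mul_term, sgl_apply0, sgl_apply1, sgl_apply2,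
      sgl_apply3, sgl_sub_sgl] at hm1220
    simp [hP3, hK2, -mul_eq_zero, -zero_eq_mul] at hm1220
    have hq1220 : ((4 : ℝ)) * coeff (sgl 0 0 2 0) (P 0) = 0 := by
      first
      | linear_combination hm1220
      | linear_combination -hm1220
    have hm1301 := congrArg (coeff (sgl 1 3 0 1)) E
    rw [chi_eq, Ga_eq] at hm1301
    simp only [mul_add, coeff_add, coeff_mul_term, sgl_apply0, sgl_apply1, sgl_apply2,
      sgl_apply3, sgl_sub_sgl] at hm1301
    simp [hP3, hK2, -mul_eq_zero, -zero_eq_mul] at hm1301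
    have hq1301 : ((4 : ℝ)) * coeff (sgl 0 1 0 1) (P 0) + ((4 : ℝ)) * coeff (sgl 1 0 0 1) (P 1) = 0 := by
      first
      | linear_combination hm1301
      | linear_combination -hm1301
    have hm1310 := congrArg (coeff (sgl 1 3 1 0)) E
    rw [chi_eq, Ga_eq] at hm1310
    simp only [mul_add, coeff_add, coeff_mul_term, sgl_apply0, sgl_apply1, sgl_apply2,
      sgl_apply3, sgl_sub_sgl] at hm1310
    simp [hP3, hK2, -mul_eq_zero, -zero_eq_mul] at hm1310
    have hq1310 : ((4 : ℝ)) * coeff (sgl 0 1 1 0) (P 0) + ((4 : ℝ)) * coeff (sgl 1 0 1 0) (P 1) = 0 := by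
      first
      | linear_combination hm1310
      | linear_combination -hm1310
    have hm1400 := congrArg (coeff (sgl 1 4 0 0)) E
    rw [chi_eq, Ga_eq] at hm1400
    simp only [mul_add, coeff_add, coeff_mul_term, sgl_apply0, sgl_apply1, sgl_apply2,
      sgl_apply3, sgl_sub_sgl] at hm1400
    simp [hP3, hK2, -mul_eq_zero, -zero_eq_mul] at hm1400
    have hq1400 : ((-1 : ℝ)) * coeff (sgl 1 0 0 0) K + ((4 : ℝ)) * coeff (sgl 0 2 0 0) (P 0) + ((4 : ℝ)) * coeff (sgl 1 1 0 0) (P 1) = 0 := by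
      first
      | linear_combination hm1400
      | linear_combination -hm1400
    have hm2201 := congrArg (coeff (sgl 2 2 0 1)) E
    rw [chi_eq, Ga_eq] at hm2201
    simp only [mul_add, coeff_add, coeff_mul_term, sgl_apply0, sgl_apply1, sgl_apply2,
      sgl_apply3, sgl_sub_sgl] at hm2201
    simp [hP3, hK2, -mul_eq_zero, -zero_eq_mul] at hm2201
    have hq2201 : ((-2 : ℝ)) * coeff (sgl 0 0 0 1) K + ((4 : ℝ)) * coeff (sgl 1 0 0 1) (P 0) + ((4 : ℝ)) * coeff (sgl 0 1 0 1) (P 1) = 0 := by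
      first
      | linear_combination hm2201
      | linear_combination -hm2201
    have hm2210 := congrArg (coeff (sgl 2 2 1 0)) E
    rw [chi_eq, Ga_eq] at hm2210
    simp only [mul_add, coeff_add, coeff_mul_term, sgl_apply0, sgl_apply1, sgl_apply2,
      sgl_apply3, sgl_sub_sgl] at hm2210
    simp [hP3, hK2, -mul_eq_zero, -zero_eq_mul] at hm2210
    have hq2210 : ((-2 : ℝ)) * coeff (sgl 0 0 1 0) K + ((4 : ℝ)) * coeff (sgl 1 0 1 0) (P 0) + ((4 : ℝ)) * coeff (sgl 0 1 1 0) (P 1) = 0 := by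
      first
      | linear_combination hm2210
      | linear_combination -hm2210
    have tk0 : ((1 : ℝ)) * coeff (sgl 0 0 0 0) K = 0 := by
      have hclr : (a ^ 4 - 1) * (((1 : ℝ)) * coeff (sgl 0 0 0 0) K) = 0 := by linear_combination ((-1 : ℝ)) * hq0000
      rcases mul_eq_zero.mp hclr with h | h
      · exact absurd h hDa41
      · exact h
    have tk1 : ((1 : ℝ)) * coeff (sgl 1 0 0 0) K = 0 := by linear_combination ((1 : ℝ)) * hq1000 + ((1 : ℝ) * a ^ 2) * hq1200 + ((1 : ℝ) * a ^ 4) * hq1400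
    have tk2 : ((1 : ℝ)) * coeff (sgl 0 1 0 0) K = 0 := by linear_combination ((1 : ℝ)) * hq0100 + ((1 : ℝ) * a ^ 2) * hq0300 + ((1 : ℝ) * a ^ 4) * hq0500
    have tp0_0 : ((1 : ℝ)) * coeff (sgl 0 0 0 0) (P 0) = 0 := by linear_combination ((-1/4 : ℝ) * a ^ 2) * hq1000 + ((-1/4 : ℝ) * a ^ 4 + (1/4 : ℝ)) * hq1200 + ((-1/4 : ℝ) * a ^ 6 + (1/4 : ℝ) * a ^ 2) * hq1400
    have tp0_x0 : ((1 : ℝ)) * coeff (sgl 1 0 0 0) (P 0) = 0 := by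
      have hclr : (a ^ 2 * (a ^ 4 - 1)) * (((1 : ℝ)) * coeff (sgl 1 0 0 0) (P 0)) = 0 := by linear_combination ((-1/2 : ℝ) * a ^ 2) * hq0000 + ((-1/4 : ℝ) * a ^ 4 + (1/4 : ℝ)) * hq2000
      rcases mul_eq_zero.mp hclr with h | h
      · exact absurd h hDprod
      · exact h
    have tp0_x2 : ((1 : ℝ)) * coeff (sgl 0 0 1 0) (P 0) = 0 := by linear_combination ((1/4 : ℝ)) * hq1210
    have tp0_x3 : ((1 : ℝ)) * coeff (sgl 0 0 0 1) (P 0) = 0 := by linear_combination ((1/4 : ℝ)) * hq1201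
    have tp0_x00 : ((1 : ℝ)) * coeff (sgl 2 0 0 0) (P 0) = 0 := by
      have hclr : a ^ 2 * (((1 : ℝ)) * coeff (sgl 2 0 0 0) (P 0)) = 0 := by linear_combination ((1/4 : ℝ) * a ^ 2) * hq1000 + ((1/4 : ℝ) * a ^ 4 + (1/4 : ℝ)) * hq1200 + ((1/4 : ℝ) * a ^ 6 + (1/4 : ℝ) * a ^ 2) * hq1400 + ((-1/4 : ℝ)) * hq3000
      rcases mul_eq_zero.mp hclr with h | h
      · exact absurd h hDa2
      · exact h
    have tp0_x02 : ((-1/4 : ℝ)) * coeff (sgl 0 0 1 0) K + ((1 : ℝ)) * coeff (sgl 1 0 1 0) (P 0) = 0 := by linear_combination ((-1/4 : ℝ)) * hq0410 + ((1/4 : ℝ)) * hq2210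
    have tp0_x03 : ((-1/4 : ℝ)) * coeff (sgl 0 0 0 1) K + ((1 : ℝ)) * coeff (sgl 1 0 0 1) (P 0) = 0 := by linear_combination ((-1/4 : ℝ)) * hq0401 + ((1/4 : ℝ)) * hq2201
    have tp0_x22 : ((1 : ℝ)) * coeff (sgl 0 0 2 0) (P 0) = 0 := by linear_combination ((1/4 : ℝ)) * hq1220
    have tp0_x23 : ((1 : ℝ)) * coeff (sgl 0 0 1 1) (P 0) = 0 := by linear_combination ((1/4 : ℝ)) * hq1211
    have tp0_x33 : ((1 : ℝ)) * coeff (sgl 0 0 0 2) (P 0) = 0 := by linear_combination ((1/4 : ℝ)) * hq1202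
    have tp1_0 : ((1 : ℝ)) * coeff (sgl 0 0 0 0) (P 1) = 0 := by linear_combination ((-1/4 : ℝ) * a ^ 2) * hq0100 + ((-1/4 : ℝ) * a ^ 4 + (1/4 : ℝ)) * hq0300 + ((-1/4 : ℝ) * a ^ 6 + (1/4 : ℝ) * a ^ 2) * hq0500
    have tp1_x0 : ((1 : ℝ)) * coeff (sgl 0 1 0 0) (P 0) + ((1 : ℝ)) * coeff (sgl 1 0 0 0) (P 1) = 0 := by
      have hclr : a ^ 2 * (((1 : ℝ)) * coeff (sgl 0 1 0 0) (P 0) + ((1 : ℝ)) * coeff (sgl 1 0 0 0) (P 1)) = 0 := by linear_combination ((-1/4 : ℝ)) * hq1100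
      rcases mul_eq_zero.mp hclr with h | h
      · exact absurd h hDa2
      · exact h
    have tp1_x1 : ((1 : ℝ)) * coeff (sgl 0 1 0 0) (P 1) = 0 := by
      have hclr : (a ^ 2 * (a ^ 4 - 1)) * (((1 : ℝ)) * coeff (sgl 0 1 0 0) (P 1)) = 0 := by linear_combination ((-1/2 : ℝ) * a ^ 2) * hq0000 + ((-1/4 : ℝ) * a ^ 4 + (1/4 : ℝ)) * hq0200
      rcases mul_eq_zero.mp hclr with h | h
      · exact absurd h hDprod
      · exact h
    have tp1_x2 : ((1 : ℝ)) * coeff (sgl 0 0 1 0) (P 1) = 0 := by linear_combination ((1/4 : ℝ)) * hq0310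
    have tp1_x3 : ((1 : ℝ)) * coeff (sgl 0 0 0 1) (P 1) = 0 := by linear_combination ((1/4 : ℝ)) * hq0301
    have tp1_x00 : ((1 : ℝ)) * coeff (sgl 1 1 0 0) (P 0) + ((1 : ℝ)) * coeff (sgl 2 0 0 0) (P 1) = 0 := by
      have hclr : a ^ 2 * (((1 : ℝ)) * coeff (sgl 1 1 0 0) (P 0) + ((1 : ℝ)) * coeff (sgl 2 0 0 0) (P 1)) = 0 := by linear_combination ((1/4 : ℝ) * a ^ 2) * hq0100 + ((1/4 : ℝ) * a ^ 4 + (1/4 : ℝ)) * hq0300 + ((1/4 : ℝ) * a ^ 6 + (1/4 : ℝ) * a ^ 2) * hq0500 + ((-1/4 : ℝ)) * hq2100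
      rcases mul_eq_zero.mp hclr with h | h
      · exact absurd h hDa2
      · exact h
    have tp1_x01 : ((1 : ℝ)) * coeff (sgl 0 2 0 0) (P 0) + ((1 : ℝ)) * coeff (sgl 1 1 0 0) (P 1) = 0 := by linear_combination ((1/4 : ℝ)) * hq1000 + ((1/4 : ℝ) * a ^ 2) * hq1200 + ((1/4 : ℝ) * a ^ 4 + (1/4 : ℝ)) * hq1400
    have tp1_x11 : ((1 : ℝ)) * coeff (sgl 0 2 0 0) (P 1) = 0 := by linear_combination ((1/4 : ℝ)) * hq0100 + ((1/4 : ℝ) * a ^ 2) * hq0300 + ((1/4 : ℝ) * a ^ 4 + (1/4 : ℝ)) * hq0500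
    have tp1_x02 : ((1 : ℝ)) * coeff (sgl 0 1 1 0) (P 0) + ((1 : ℝ)) * coeff (sgl 1 0 1 0) (P 1) = 0 := by linear_combination ((1/4 : ℝ)) * hq1310
    have tp1_x12 : ((-1/4 : ℝ)) * coeff (sgl 0 0 1 0) K + ((1 : ℝ)) * coeff (sgl 0 1 1 0) (P 1) = 0 := by linear_combination ((1/4 : ℝ)) * hq0410
    have tp1_x03 : ((1 : ℝ)) * coeff (sgl 0 1 0 1) (P 0) + ((1 : ℝ)) * coeff (sgl 1 0 0 1) (P 1) = 0 := by linear_combination ((1/4 : ℝ)) * hq1301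
    have tp1_x13 : ((-1/4 : ℝ)) * coeff (sgl 0 0 0 1) K + ((1 : ℝ)) * coeff (sgl 0 1 0 1) (P 1) = 0 := by linear_combination ((1/4 : ℝ)) * hq0401
    have tp1_x22 : ((1 : ℝ)) * coeff (sgl 0 0 2 0) (P 1) = 0 := by linear_combination ((1/4 : ℝ)) * hq0320
    have tp1_x23 : ((1 : ℝ)) * coeff (sgl 0 0 1 1) (P 1) = 0 := by linear_combination ((1/4 : ℝ)) * hq0311
    have tp1_x33 : ((1 : ℝ)) * coeff (sgl 0 0 0 2) (P 1) = 0 := by linear_combination ((1/4 : ℝ)) * hq0302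
    have tp2_0 : ((-1/2 : ℝ) * a ^ 4 + (1/2 : ℝ)) * coeff (sgl 0 0 1 0) K + ((1 : ℝ)) * coeff (sgl 0 0 0 0) (P 2) = 0 := by linear_combination ((1/2 : ℝ)) * hq0010
    have tp2_x0 : ((1 : ℝ)) * coeff (sgl 1 0 0 0) (P 2) = 0 := by linear_combination ((1/2 : ℝ)) * hq1010 + ((1/2 : ℝ) * a ^ 2) * hq1210
    have tp2_x1 : ((1 : ℝ)) * coeff (sgl 0 1 0 0) (P 2) = 0 := by linear_combination ((1/2 : ℝ)) * hq0110 + ((1/2 : ℝ) * a ^ 2) * hq0310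
    have tp2_x2 : ((1 : ℝ)) * coeff (sgl 0 0 1 0) (P 2) = 0 := by
      have hclr : (a ^ 4 - 1) * (((1 : ℝ)) * coeff (sgl 0 0 1 0) (P 2)) = 0 := by linear_combination ((-1/2 : ℝ)) * hq0000 + ((1/2 : ℝ) * a ^ 4 + (-1/2 : ℝ)) * hq0020
      rcases mul_eq_zero.mp hclr with h | h
      · exact absurd h hDa41
      · exact h
    have tp2_x00 : ((1/2 : ℝ) * a ^ 2) * coeff (sgl 0 0 1 0) K + ((1 : ℝ)) * coeff (sgl 2 0 0 0) (P 2) = 0 := by linear_combination ((-1/2 : ℝ) * a ^ 2) * hq0410 + ((1/2 : ℝ)) * hq2010 + ((1/2 : ℝ) * a ^ 2) * hq2210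
    have tp2_x01 : ((1 : ℝ)) * coeff (sgl 1 1 0 0) (P 2) = 0 := by linear_combination ((1/2 : ℝ)) * hq1110 + ((1/2 : ℝ) * a ^ 2) * hq1310
    have tp2_x11 : ((1/2 : ℝ) * a ^ 2) * coeff (sgl 0 0 1 0) K + ((1 : ℝ)) * coeff (sgl 0 2 0 0) (P 2) = 0 := by linear_combination ((1/2 : ℝ)) * hq0210 + ((1/2 : ℝ) * a ^ 2) * hq0410
    have tp2_x02 : ((1 : ℝ)) * coeff (sgl 1 0 1 0) (P 2) = 0 := by linear_combination ((1/2 : ℝ)) * hq1000 + ((1/2 : ℝ)) * hq1020 + ((1/2 : ℝ) * a ^ 2) * hq1200 + ((1/2 : ℝ) * a ^ 2) * hq1220 + ((1/2 : ℝ) * a ^ 4) * hq1400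
    have tp2_x12 : ((1 : ℝ)) * coeff (sgl 0 1 1 0) (P 2) = 0 := by linear_combination ((1/2 : ℝ)) * hq0100 + ((1/2 : ℝ)) * hq0120 + ((1/2 : ℝ) * a ^ 2) * hq0300 + ((1/2 : ℝ) * a ^ 2) * hq0320 + ((1/2 : ℝ) * a ^ 4) * hq0500
    have tp2_x22 : ((-1/2 : ℝ)) * coeff (sgl 0 0 1 0) K + ((1 : ℝ)) * coeff (sgl 0 0 2 0) (P 2) = 0 := by linear_combination ((1/2 : ℝ)) * hq0030
    have tp3_0 : ((-1/2 : ℝ) * a ^ 4 + (1/2 : ℝ)) * coeff (sgl 0 0 0 1) K + ((1 : ℝ)) * coeff (sgl 0 0 0 0) (P 3) = 0 := by linear_combination ((1/2 : ℝ)) * hq0001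
    have tp3_x0 : ((1 : ℝ)) * coeff (sgl 1 0 0 0) (P 3) = 0 := by linear_combination ((1/2 : ℝ)) * hq1001 + ((1/2 : ℝ) * a ^ 2) * hq1201
    have tp3_x1 : ((1 : ℝ)) * coeff (sgl 0 1 0 0) (P 3) = 0 := by linear_combination ((1/2 : ℝ)) * hq0101 + ((1/2 : ℝ) * a ^ 2) * hq0301
    have tp3_x2 : ((1 : ℝ)) * coeff (sgl 0 0 0 1) (P 2) + ((1 : ℝ)) * coeff (sgl 0 0 1 0) (P 3) = 0 := by linear_combination ((1/2 : ℝ)) * hq0011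
    have tp3_x3 : ((1 : ℝ)) * coeff (sgl 0 0 0 1) (P 3) = 0 := by
      have hclr : (a ^ 4 - 1) * (((1 : ℝ)) * coeff (sgl 0 0 0 1) (P 3)) = 0 := by linear_combination ((-1/2 : ℝ)) * hq0000 + ((1/2 : ℝ) * a ^ 4 + (-1/2 : ℝ)) * hq0002
      rcases mul_eq_zero.mp hclr with h | h
      · exact absurd h hDa41
      · exact h
    have tp3_x00 : ((1/2 : ℝ) * a ^ 2) * coeff (sgl 0 0 0 1) K + ((1 : ℝ)) * coeff (sgl 2 0 0 0) (P 3) = 0 := by linear_combination ((-1/2 : ℝ) * a ^ 2) * hq0401 + ((1/2 : ℝ)) * hq2001 + ((1/2 : ℝ) * a ^ 2) * hq2201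
    have tp3_x01 : ((1 : ℝ)) * coeff (sgl 1 1 0 0) (P 3) = 0 := by linear_combination ((1/2 : ℝ)) * hq1101 + ((1/2 : ℝ) * a ^ 2) * hq1301
    have tp3_x11 : ((1/2 : ℝ) * a ^ 2) * coeff (sgl 0 0 0 1) K + ((1 : ℝ)) * coeff (sgl 0 2 0 0) (P 3) = 0 := by linear_combination ((1/2 : ℝ)) * hq0201 + ((1/2 : ℝ) * a ^ 2) * hq0401
    have tp3_x02 : ((1 : ℝ)) * coeff (sgl 1 0 0 1) (P 2) + ((1 : ℝ)) * coeff (sgl 1 0 1 0) (P 3) = 0 := by linear_combination ((1/2 : ℝ)) * hq1011 + ((1/2 : ℝ) * a ^ 2) * hq1211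
    have tp3_x12 : ((1 : ℝ)) * coeff (sgl 0 1 0 1) (P 2) + ((1 : ℝ)) * coeff (sgl 0 1 1 0) (P 3) = 0 := by linear_combination ((1/2 : ℝ)) * hq0111 + ((1/2 : ℝ) * a ^ 2) * hq0311
    have tp3_x03 : ((1 : ℝ)) * coeff (sgl 1 0 0 1) (P 3) = 0 := by linear_combination ((1/2 : ℝ)) * hq1000 + ((1/2 : ℝ)) * hq1002 + ((1/2 : ℝ) * a ^ 2) * hq1200 + ((1/2 : ℝ) * a ^ 2) * hq1202 + ((1/2 : ℝ) * a ^ 4) * hq1400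
    have tp3_x13 : ((1 : ℝ)) * coeff (sgl 0 1 0 1) (P 3) = 0 := by linear_combination ((1/2 : ℝ)) * hq0100 + ((1/2 : ℝ)) * hq0102 + ((1/2 : ℝ) * a ^ 2) * hq0300 + ((1/2 : ℝ) * a ^ 2) * hq0302 + ((1/2 : ℝ) * a ^ 4) * hq0500
    have tp3_x22 : ((-1/2 : ℝ)) * coeff (sgl 0 0 0 1) K + ((1 : ℝ)) * coeff (sgl 0 0 1 1) (P 2) + ((1 : ℝ)) * coeff (sgl 0 0 2 0) (P 3) = 0 := by linear_combination ((1/2 : ℝ)) * hq0021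
    have tp3_x23 : ((-1/2 : ℝ)) * coeff (sgl 0 0 1 0) K + ((1 : ℝ)) * coeff (sgl 0 0 0 2) (P 2) + ((1 : ℝ)) * coeff (sgl 0 0 1 1) (P 3) = 0 := by linear_combination ((1/2 : ℝ)) * hq0012
    have tp3_x33 : ((-1/2 : ℝ)) * coeff (sgl 0 0 0 1) K + ((1 : ℝ)) * coeff (sgl 0 0 0 2) (P 3) = 0 := by linear_combination ((1/2 : ℝ)) * hq0003
    refine ⟨coeff (sgl 0 0 1 0) K, coeff (sgl 0 0 0 1) K,
      C (coeff (sgl 0 1 0 0) (P 0)) + C (coeff (sgl 1 1 0 0) (P 0)) * X 0 +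
        C (coeff (sgl 0 2 0 0) (P 0)) * X 1 + C (coeff (sgl 0 1 1 0) (P 0)) * X 2 +
        C (coeff (sgl 0 1 0 1) (P 0)) * X 3,
      C (coeff (sgl 0 0 0 1) (P 2)) + C (coeff (sgl 1 0 0 1) (P 2)) * X 0 +
        C (coeff (sgl 0 1 0 1) (P 2)) * X 1 + C (coeff (sgl 0 0 1 1) (P 2)) * X 2 +
        C (coeff (sgl 0 0 0 2) (P 2) - coeff (sgl 0 0 1 0) K / 2) * X 3,
      deg1_le _ _ _ _ _, deg1_le _ _ _ _ _, ?_, ?_, ?_, ?_, ?_⟩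
    · refine MvPolynomial.funext fun x => ?_
      conv_lhs => rw [expand2 (P 0) (fun m h => coeff_zero_of_d4 (hdeg 0) h)]
      simp only [map_add, map_mul, map_sub, map_neg, map_pow, eval_C, eval_X]
      linear_combination tp0_0 + (tp0_x0) * (x 0) + (tp0_x2) * (x 2) + (tp0_x3) * (x 3) + (tp0_x00) * (x 0 ^ 2) + (tp0_x02) * (x 0 * x 2) + (tp0_x03) * (x 0 * x 3) + (tp0_x22) * (x 2 ^ 2) + (tp0_x23) * (x 2 * x 3) + (tp0_x33) * (x 3 ^ 2)
    · refine MvPolynomial.funext fun x => ?_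
      conv_lhs => rw [expand2 (P 1) (fun m h => coeff_zero_of_d4 (hdeg 1) h)]
      simp only [map_add, map_mul, map_sub, map_neg, map_pow, eval_C, eval_X]
      linear_combination tp1_0 + (tp1_x0) * (x 0) + (tp1_x1) * (x 1) + (tp1_x2) * (x 2) + (tp1_x3) * (x 3) + (tp1_x00) * (x 0 ^ 2) + (tp1_x01) * (x 0 * x 1) + (tp1_x11) * (x 1 ^ 2) + (tp1_x02) * (x 0 * x 2) + (tp1_x12) * (x 1 * x 2) + (tp1_x03) * (x 0 * x 3) + (tp1_x13) * (x 1 * x 3) + (tp1_x22) * (x 2 ^ 2) + (tp1_x23) * (x 2 * x 3) + (tp1_x33) * (x 3 ^ 2)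
    · refine MvPolynomial.funext fun x => ?_
      conv_lhs => rw [expand2 (P 2) (fun m h => coeff_zero_of_d4 (hdeg 2) h)]
      simp only [map_add, map_mul, map_sub, map_neg, map_pow, eval_C, eval_X]
      linear_combination tp2_0 + (tp2_x0) * (x 0) + (tp2_x1) * (x 1) + (tp2_x2) * (x 2) + (tp2_x00) * (x 0 ^ 2) + (tp2_x01) * (x 0 * x 1) + (tp2_x11) * (x 1 ^ 2) + (tp2_x02) * (x 0 * x 2) + (tp2_x12) * (x 1 * x 2) + (tp2_x22) * (x 2 ^ 2)
    · refine MvPolynomial.funext fun x => ?_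
      conv_lhs => rw [expand2 (P 3) (fun m h => coeff_zero_of_d4 (hdeg 3) h)]
      simp only [map_add, map_mul, map_sub, map_neg, map_pow, eval_C, eval_X]
      linear_combination tp3_0 + (tp3_x0) * (x 0) + (tp3_x1) * (x 1) + (tp3_x2) * (x 2) + (tp3_x3) * (x 3) + (tp3_x00) * (x 0 ^ 2) + (tp3_x01) * (x 0 * x 1) + (tp3_x11) * (x 1 ^ 2) + (tp3_x02) * (x 0 * x 2) + (tp3_x12) * (x 1 * x 2) + (tp3_x03) * (x 0 * x 3) + (tp3_x13) * (x 1 * x 3) + (tp3_x22) * (x 2 ^ 2) + (tp3_x23) * (x 2 * x 3) + (tp3_x33) * (x 3 ^ 2)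
    · have hKform : K = C (coeff (sgl 0 0 1 0) K) * X 2 + C (coeff (sgl 0 0 0 1) K) * X 3 := by
        refine MvPolynomial.funext fun x => ?_
        conv_lhs => rw [expand2 K (fun m h => hKz m (by omega))]
        simp only [map_add, map_mul, map_pow, eval_C, eval_X]
        linear_combination tk0 + (tk1) * (x 0) + (tk2) * (x 1) + (hK2 2 0 0 0 (by norm_num)) * (x 0 ^ 2) + (hK2 1 1 0 0 (by norm_num)) * (x 0 * x 1) + (hK2 1 0 1 0 (by norm_num)) * (x 0 * x 2) + (hK2 1 0 0 1 (by norm_num)) * (x 0 * x 3) + (hK2 0 2 0 0 (by norm_num)) * (x 1 ^ 2) + (hK2 0 1 1 0 (by norm_num)) * (x 1 * x 2) + (hK2 0 1 0 1 (by norm_num)) * (x 1 * x 3) + (hK2 0 0 2 0 (by norm_num)) * (x 2 ^ 2) + (hK2 0 0 1 1 (by norm_num)) * (x 2 * x 3) + (hK2 0 0 0 2 (by norm_num)) * (x 3 ^ 2)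
      rw [E]
      exact congrArg (fun q => q * Ga a) hKform
  · rintro ⟨k₃, k₄, f, g, -, -, -, -, -, -, hlast⟩
    exact ⟨_, hlast⟩
end

section
/- There is no nonzero Lotka-Volterra vector field on S¹×S²: if χ = (P₁,P₂,P₃,P₄) is a polynomial vector field in ℝ⁴ with Pᵢ = xᵢ·ℓᵢ for polynomials ℓᵢ ∈ ℝ[x₁,x₂,x₃,x₄] of degree at most 1 (i = 1,2,3,4), and χ is a vector field on S¹×S², then P₁ = P₂ = P₃ = P₄ = 0. -/
open MvPolynomial

lemma monom_classify (m : Fin 4 →₀ ℕ) (h : (m.sum fun _ e => e) ≤ 1) :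
    m = 0 ∨ ∃ j, m = Finsupp.single j 1 := by
  rw [Finsupp.sum_fintype _ _ (fun _ => rfl), Fin.sum_univ_four] at h
  by_cases h0 : m = 0
  · exact Or.inl h0
  · right
    obtain ⟨j, hj⟩ := Finsupp.ne_iff.mp h0
    simp only [Finsupp.coe_zero, Pi.zero_apply] at hj
    refine ⟨j, ?_⟩
    ext k
    fin_cases j <;> fin_cases k <;> simp_all <;> omega

lemma decomp (q : MvPolynomial (Fin 4) ℝ) (h : q.totalDegree ≤ 1) :
    q = C (coeff 0 q) + ∑ j : Fin 4, C (coeff (Finsupp.single j 1) q) * X j := by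
  apply MvPolynomial.ext; intro m
  rw [coeff_add, coeff_C]
  rw [coeff_sum]
  simp only [coeff_C_mul]
  simp only [coeff_X']
  by_cases hm : (m.sum fun _ e => e) ≤ 1
  · rcases monom_classify m hm with h0 | ⟨j, rfl⟩
    · subst h0; simp [Finsupp.single_eq_zero]
    · rw [Finset.sum_eq_single j]
      · rw [if_neg (by rw [eq_comm, Finsupp.single_eq_zero]; exact one_ne_zero), if_pos rfl]
        ring
      · intro k _ hk
        rw [if_neg (by simp [Finsupp.single_eq_single_iff, hk])]
        ring
      · simp
  · push_neg at hm
    have hz : coeff m q = 0 := coeff_eq_zero_of_totalDegree_lt (lt_of_le_of_lt h hm)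
    rw [hz]
    have hm0 : m ≠ 0 := by rintro rfl; simp at hm
    have hms : ∀ j : Fin 4, Finsupp.single j 1 ≠ m := by
      rintro j rfl
      simp [Finsupp.sum_single_index] at hm
    rw [if_neg (fun he => hm0 he.symm)]
    rw [Finset.sum_eq_zero (fun j _ => by rw [if_neg (hms j), mul_zero])]
    ring

lemma evalchi (a : ℝ) (P ℓ : Fin 4 → MvPolynomial (Fin 4) ℝ)
    (hLV : ∀ i, P i = X i * ℓ i) (x : Fin 4 → ℝ) :
    eval x (chi P (Ga a)) =
      4*(x 0)^2*(eval x (ℓ 0))*((x 0)^2 + (x 1)^2 - a^2)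
      + 4*(x 1)^2*(eval x (ℓ 1))*((x 0)^2 + (x 1)^2 - a^2)
      + 2*(x 2)^2*(eval x (ℓ 2)) + 2*(x 3)^2*(eval x (ℓ 3)) := by
  simp only [chi, Ga, hLV, Fin.sum_univ_four]
  simp [pderiv_X, Pi.single_apply]
  ring

set_option maxHeartbeats 1000000 in
theorem stmt_2 (a : ℝ) (ha : 1 < a) (P ℓ : Fin 4 → MvPolynomial (Fin 4) ℝ)
    (hLV : ∀ i, P i = X i * ℓ i) (hdeg : ∀ i, (ℓ i).totalDegree ≤ 1)
    (hvf : ∃ K : MvPolynomial (Fin 4) ℝ, chi P (Ga a) = K * Ga a) :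
    ∀ i, P i = 0 := by
  obtain ⟨K, hK⟩ := hvf
  set c : Fin 4 → ℝ := fun i => coeff 0 (ℓ i) with hcdef
  set A : Fin 4 → Fin 4 → ℝ := fun i j => coeff (Finsupp.single j 1) (ℓ i) with hAdef
  have heval : ∀ i (y : Fin 4 → ℝ), eval y (ℓ i)
      = c i + (A i 0 * y 0 + A i 1 * y 1 + A i 2 * y 2 + A i 3 * y 3) := by
    intro i y
    conv_lhs => rw [decomp (ℓ i) (hdeg i)]
    simp [Fin.sum_univ_four, hcdef, hAdef]
  have ha0 : (0:ℝ) < a := lt_trans one_pos ha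
  have key : ∀ x0 x1 x2 x3 s : ℝ, x0^2 + x1^2 - a^2 = s → s^2 + x2^2 + x3^2 = 1 →
      4*x0^2*(c 0 + (A 0 0*x0 + A 0 1*x1 + A 0 2*x2 + A 0 3*x3))*s + 4*x1^2*(c 1 + (A 1 0*x0 + A 1 1*x1 + A 1 2*x2 + A 1 3*x3))*s + 2*x2^2*(c 2 + (A 2 0*x0 + A 2 1*x1 + A 2 2*x2 + A 2 3*x3)) + 2*x3^2*(c 3 + (A 3 0*x0 + A 3 1*x1 + A 3 2*x2 + A 3 3*x3)) = 0 := by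
    intro x0 x1 x2 x3 s hs hG
    have m0 : (![x0,x1,x2,x3] : Fin 4 → ℝ) 0 = x0 := rfl
    have m1 : (![x0,x1,x2,x3] : Fin 4 → ℝ) 1 = x1 := rfl
    have m2 : (![x0,x1,x2,x3] : Fin 4 → ℝ) 2 = x2 := rfl
    have m3 : (![x0,x1,x2,x3] : Fin 4 → ℝ) 3 = x3 := rfl
    have hGx : eval ![x0,x1,x2,x3] (Ga a) = 0 := by
      have h : eval ![x0,x1,x2,x3] (Ga a) = (x0^2+x1^2-a^2)^2+x2^2+x3^2-1 := by
        simp [Ga]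
      rw [h]
      linear_combination (x0^2+x1^2-a^2+s)*hs + hG
    have hchi := congrArg (eval ![x0,x1,x2,x3]) hK
    rw [map_mul, hGx, mul_zero, evalchi a P ℓ hLV ![x0,x1,x2,x3]] at hchi
    simp only [heval, m0, m1, m2, m3] at hchi
    linear_combination hchi - (4*x0^2*(c 0 + (A 0 0*x0 + A 0 1*x1 + A 0 2*x2 + A 0 3*x3)) + 4*x1^2*(c 1 + (A 1 0*x0 + A 1 1*x1 + A 1 2*x2 + A 1 3*x3)))*hs
  set u : ℝ := Real.sqrt (a^2+1) with hudef
  have hupos : 0 < u := Real.sqrt_pos.mpr (by positivity)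
  have hu : u^2 = a^2+1 := Real.sq_sqrt (by positivity)
  set w : ℝ := Real.sqrt (a^2+4/5) with hwdef
  have hwpos : 0 < w := Real.sqrt_pos.mpr (by positivity)
  have hw : w^2 = a^2+4/5 := Real.sq_sqrt (by positivity)
  have h1 := key u 0 0 0 1 (by linear_combination hu) (by norm_num)
  have h2 := key (-u) 0 0 0 1 (by linear_combination hu) (by norm_num)
  have h3 := key 0 u 0 0 1 (by linear_combination hu) (by norm_num)
  have h4 := key 0 (-u) 0 0 1 (by linear_combination hu) (by norm_num)
  have h5 := key a 0 1 0 0 (by ring) (by norm_num)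
  have h6 := key (-a) 0 1 0 0 (by ring) (by norm_num)
  have h7 := key a 0 (-1) 0 0 (by ring) (by norm_num)
  have h8 := key 0 a 1 0 0 (by ring) (by norm_num)
  have h9 := key a 0 0 1 0 (by ring) (by norm_num)
  have h10 := key (-a) 0 0 1 0 (by ring) (by norm_num)
  have h11 := key a 0 0 (-1) 0 (by ring) (by norm_num)
  have h12 := key 0 a 0 1 0 (by ring) (by norm_num)
  have h13 := key a 0 (3/5) (4/5) 0 (by ring) (by norm_num)
  have h14 := key a 0 (4/5) (3/5) 0 (by ring) (by norm_num)
  have h15 := key a 1 0 0 1 (by ring) (by norm_num)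
  have h16 := key a (-1) 0 0 1 (by ring) (by norm_num)
  have h17 := key w 0 (3/5) 0 (4/5) (by linear_combination hw) (by norm_num)
  have h18 := key w 0 0 (3/5) (4/5) (by linear_combination hw) (by norm_num)
  have h19 := key 0 w (3/5) 0 (4/5) (by linear_combination hw) (by norm_num)
  have h20 := key 0 w 0 (3/5) (4/5) (by linear_combination hw) (by norm_num)
  have zc0 : c 0 = 0 := by
    have h : (8*u^2) * c 0 = 0 := by linear_combination h1 + h2
    exact (mul_eq_zero.mp h).resolve_left (by positivity)
  have zA00 : A 0 0 = 0 := by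
    have h : (8*u^3) * A 0 0 = 0 := by linear_combination h1 - h2
    exact (mul_eq_zero.mp h).resolve_left (by positivity)
  have zc1 : c 1 = 0 := by
    have h : (8*u^2) * c 1 = 0 := by linear_combination h3 + h4
    exact (mul_eq_zero.mp h).resolve_left (by positivity)
  have zA11 : A 1 1 = 0 := by
    have h : (8*u^3) * A 1 1 = 0 := by linear_combination h3 - h4
    exact (mul_eq_zero.mp h).resolve_left (by positivity)
  have zA20 : A 2 0 = 0 := by
    have h : (4*a) * A 2 0 = 0 := by linear_combination h5 - h6
    exact (mul_eq_zero.mp h).resolve_left (by positivity)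
  have zA22 : A 2 2 = 0 := by
    have h : (4:ℝ) * A 2 2 = 0 := by linear_combination h5 - h7
    linarith
  have zc2 : c 2 = 0 := by
    rw [zA20, zA22] at h5
    have h : (2:ℝ) * c 2 = 0 := by linear_combination h5
    linarith
  have zA21 : A 2 1 = 0 := by
    rw [zc2, zA22] at h8
    have h : (2*a) * A 2 1 = 0 := by linear_combination h8
    exact (mul_eq_zero.mp h).resolve_left (by positivity)
  have zA30 : A 3 0 = 0 := by
    have h : (4*a) * A 3 0 = 0 := by linear_combination h9 - h10
    exact (mul_eq_zero.mp h).resolve_left (by positivity)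
  have zA33 : A 3 3 = 0 := by
    have h : (4:ℝ) * A 3 3 = 0 := by linear_combination h9 - h11
    linarith
  have zc3 : c 3 = 0 := by
    rw [zA30, zA33] at h9
    have h : (2:ℝ) * c 3 = 0 := by linear_combination h9
    linarith
  have zA31 : A 3 1 = 0 := by
    rw [zc3, zA33] at h12
    have h : (2*a) * A 3 1 = 0 := by linear_combination h12
    exact (mul_eq_zero.mp h).resolve_left (by positivity)
  rw [zc2, zA20, zA22, zc3, zA30, zA33] at h13 h14
  have zA23 : A 2 3 = 0 := by
    have h : (168/125:ℝ) * A 2 3 = 0 := by linear_combination 4*h14 - 3*h13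
    linarith
  have zA32 : A 3 2 = 0 := by
    have h : (168/125:ℝ) * A 3 2 = 0 := by linear_combination 4*h13 - 3*h14
    linarith
  have zA01 : A 0 1 = 0 := by
    rw [zc0, zA00, zc1, zA11] at h15 h16
    have h : (8*a^2) * A 0 1 = 0 := by linear_combination h15 - h16
    exact (mul_eq_zero.mp h).resolve_left (by positivity)
  have zA10 : A 1 0 = 0 := by
    rw [zc0, zA00, zc1, zA11] at h15 h16
    have h : (8*a) * A 1 0 = 0 := by linear_combination h15 + h16
    exact (mul_eq_zero.mp h).resolve_left (by positivity)
  have zA02 : A 0 2 = 0 := by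
    rw [zc0, zA00, zc2, zA20, zA22] at h17
    have h : ((48/25)*w^2) * A 0 2 = 0 := by linear_combination h17
    exact (mul_eq_zero.mp h).resolve_left (by positivity)
  have zA03 : A 0 3 = 0 := by
    rw [zc0, zA00, zc3, zA30, zA33] at h18
    have h : ((48/25)*w^2) * A 0 3 = 0 := by linear_combination h18
    exact (mul_eq_zero.mp h).resolve_left (by positivity)
  have zA12 : A 1 2 = 0 := by
    rw [zc1, zA11, zc2, zA21, zA22] at h19
    have h : ((48/25)*w^2) * A 1 2 = 0 := by linear_combination h19
    exact (mul_eq_zero.mp h).resolve_left (by positivity)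
  have zA13 : A 1 3 = 0 := by
    rw [zc1, zA11, zc3, zA31, zA33] at h20
    have h : ((48/25)*w^2) * A 1 3 = 0 := by linear_combination h20
    exact (mul_eq_zero.mp h).resolve_left (by positivity)
  have hceq : ∀ j, c j = 0 := by
    intro j
    fin_cases j
    · exact zc0
    · exact zc1
    · exact zc2
    · exact zc3
  have hAeq : ∀ j k, A j k = 0 := by
    intro j k
    fin_cases j <;> fin_cases k
    · exact zA00
    · exact zA01
    · exact zA02
    · exact zA03
    · exact zA10
    · exact zA11
    · exact zA12
    · exact zA13
    · exact zA20
    · exact zA21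
    · exact zA22
    · exact zA23
    · exact zA30
    · exact zA31
    · exact zA32
    · exact zA33
  intro i
  rw [hLV i]
  have hl : ℓ i = 0 := by
    apply MvPolynomial.funext
    intro y
    rw [heval i y, map_zero, hceq i, hAeq i 0, hAeq i 1, hAeq i 2, hAeq i 3]
    ring
  rw [hl, mul_zero]
end

section
/- Every quadratic vector field on S¹×S² has the rational first integral G_a/(x₁²+x₂²)²: if χ = (P₁,P₂,P₃,P₄) is a vector field on S¹×S² with each Pᵢ of degree at most 2, then the polynomial identity (χG_a)·(x₁²+x₂²) = 2·G_a·χ(x₁²+x₂²) holds in ℝ[x₁,x₂,x₃,x₄]; equivalently, the derivative of the rational function G_a·(x₁²+x₂²)^{−2} along χ is zero. -/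
open MvPolynomial

/-- Scaling map `xᵢ ↦ xᵢ · t`, separating homogeneous components into `t`-coefficients. -/
noncomputable def PhiAux : MvPolynomial (Fin 4) ℝ →ₐ[ℝ] Polynomial (MvPolynomial (Fin 4) ℝ) :=
  aeval (fun i => Polynomial.C (X i) * Polynomial.X)

lemma PhiAux_injective : Function.Injective PhiAux := by
  have h : (((Polynomial.aeval (1 : MvPolynomial (Fin 4) ℝ)) :
        Polynomial (MvPolynomial (Fin 4) ℝ) →ₐ[MvPolynomial (Fin 4) ℝ]
        MvPolynomial (Fin 4) ℝ).restrictScalars ℝ).comp PhiAux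
      = AlgHom.id ℝ (MvPolynomial (Fin 4) ℝ) := by
    apply MvPolynomial.algHom_ext
    intro i
    simp [PhiAux]
  intro f g hfg
  have h1 := AlgHom.congr_fun h f
  have h2 := AlgHom.congr_fun h g
  simp only [AlgHom.comp_apply, AlgHom.id_apply, AlgHom.coe_restrictScalars] at h1 h2
  rw [← h1, ← h2, hfg]

lemma PhiAux_coeff_zero (f : MvPolynomial (Fin 4) ℝ) :
    (PhiAux f).coeff 0 = C (constantCoeff f) := by
  have h : (Polynomial.constantCoeff).comp (PhiAux : _ →ₐ[ℝ] _).toRingHom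
      = (MvPolynomial.C).comp (MvPolynomial.constantCoeff) := by
    apply MvPolynomial.ringHom_ext
    · intro r; simp [PhiAux]
    · intro i; simp [PhiAux]
  simpa [Polynomial.constantCoeff_apply] using RingHom.congr_fun h f

lemma PhiAux_natDegree_le (f : MvPolynomial (Fin 4) ℝ) :
    (PhiAux f).natDegree ≤ f.totalDegree := by
  conv_lhs => rw [f.as_sum, map_sum]
  refine Polynomial.natDegree_sum_le_of_forall_le _ _ ?_
  intro m hm
  calc (PhiAux (monomial m (coeff m f))).natDegree
      ≤ m.sum fun _ k => k := by
        rw [PhiAux, aeval_monomial]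
        refine le_trans (Polynomial.natDegree_mul_le) ?_
        have h0 : (algebraMap ℝ (Polynomial (MvPolynomial (Fin 4) ℝ)) (coeff m f)).natDegree = 0 := by
          rw [Polynomial.algebraMap_apply]; exact Polynomial.natDegree_C _
        rw [h0, zero_add]
        refine le_trans (Polynomial.natDegree_prod_le _ _) ?_
        rw [Finsupp.sum]
        refine Finset.sum_le_sum ?_
        intro i _
        refine le_trans (Polynomial.natDegree_pow_le) ?_
        calc m i * (Polynomial.C (X i : MvPolynomial (Fin 4) ℝ) * Polynomial.X).natDegree
            ≤ m i * 1 := Nat.mul_le_mul_left _ (by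
              refine le_trans Polynomial.natDegree_mul_le ?_
              simp)
          _ = m i := mul_one _
    _ ≤ f.totalDegree := le_totalDegree hm

lemma PhiAux_coeff_eq_zero (f : MvPolynomial (Fin 4) ℝ) {n : ℕ} (h : f.totalDegree < n) :
    (PhiAux f).coeff n = 0 :=
  Polynomial.coeff_eq_zero_of_natDegree_lt (lt_of_le_of_lt (PhiAux_natDegree_le f) h)

/-- Projection killing the last two variables. -/
noncomputable def PiAux : MvPolynomial (Fin 4) ℝ →ₐ[ℝ] MvPolynomial (Fin 4) ℝ :=
  aeval (fun i => if i.val < 2 then X i else 0)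

@[simp] lemma PhiAux_X (i : Fin 4) :
    PhiAux (X i) = Polynomial.C (X i) * Polynomial.X := by simp [PhiAux]
@[simp] lemma PhiAux_Cr (r : ℝ) : PhiAux (C r) = Polynomial.C (C r) := by
  simp [PhiAux, algebraMap_eq]

@[simp] lemma PiAux_X0 : PiAux (X 0) = X 0 := by simp [PiAux]
@[simp] lemma PiAux_X1 : PiAux (X 1) = X 1 := by simp [PiAux]
@[simp] lemma PiAux_X2 : PiAux (X 2) = 0 := by simp only [PiAux, aeval_X]; rw [if_neg (by decide)]
@[simp] lemma PiAux_X3 : PiAux (X 3) = 0 := by simp only [PiAux, aeval_X]; rw [if_neg (by decide)]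
@[simp] lemma PiAux_C (r : ℝ) : PiAux (C r) = C r := by
  simp [PiAux, algebraMap_eq]


set_option maxHeartbeats 2000000 in
theorem stmt_4 (a : ℝ) (ha : 1 < a) (P : Fin 4 → MvPolynomial (Fin 4) ℝ)
    (hdeg : ∀ i, (P i).totalDegree ≤ 2)
    (hvf : ∃ K : MvPolynomial (Fin 4) ℝ, chi P (Ga a) = K * Ga a) :
    chi P (Ga a) * (X 0 ^ 2 + X 1 ^ 2) =
      2 * Ga a * chi P (X 0 ^ 2 + X 1 ^ 2) := by
  obtain ⟨K, hK⟩ := hvf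
  -- nonzero constants
  have hr0 : (X 0 ^ 2 + X 1 ^ 2 : MvPolynomial (Fin 4) ℝ) ≠ 0 := by
    intro h
    have := congrArg (MvPolynomial.eval (fun _ => (1:ℝ))) h
    simp at this
  have hg0 : (C (a ^ 2) ^ 2 - 1 : MvPolynomial (Fin 4) ℝ) ≠ 0 := by
    intro h
    have := congrArg (MvPolynomial.eval (fun _ => (0:ℝ))) h
    simp at this
    have h2 : 1 < a ^ 2 := by nlinarith
    nlinarith [h2]
  -- explicit chi computations
  have hchiG : chi P (Ga a) = 4 * X 0 * (X 0 ^ 2 + X 1 ^ 2 - C (a ^ 2)) * P 0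
      + 4 * X 1 * (X 0 ^ 2 + X 1 ^ 2 - C (a ^ 2)) * P 1
      + 2 * X 2 * P 2 + 2 * X 3 * P 3 := by
    simp [chi, Ga, Fin.sum_univ_four, pderiv_mul, pderiv_pow, pderiv_X, pderiv_C, pderiv_one]
    ring
  have hchir : chi P (X 0 ^ 2 + X 1 ^ 2) = 2 * X 0 * P 0 + 2 * X 1 * P 1 := by
    simp [chi, Fin.sum_univ_four, pderiv_pow, pderiv_X]
    ring
  -- Phi images
  have hG : PhiAux (Ga a) =
      Polynomial.C ((X 0 ^ 2 + X 1 ^ 2) ^ 2) * Polynomial.X ^ 4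
        + Polynomial.C (X 2 ^ 2 + X 3 ^ 2 - 2 * C (a ^ 2) * (X 0 ^ 2 + X 1 ^ 2)) * Polynomial.X ^ 2
        + Polynomial.C (C (a ^ 2) ^ 2 - 1) := by
    simp only [Ga, map_add, map_sub, map_mul, map_pow, map_one, map_neg, PhiAux, aeval_X, aeval_C,
      Polynomial.algebraMap_apply, algebraMap_eq, map_ofNat]
    ring
  have hL : PhiAux (chi P (Ga a)) =
      ((PhiAux (P 0) * Polynomial.C (X 0) + PhiAux (P 1) * Polynomial.C (X 1))
          * Polynomial.C (4 * (X 0 ^ 2 + X 1 ^ 2))) * Polynomial.X ^ 3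
        + ((PhiAux (P 0) * Polynomial.C (X 0) + PhiAux (P 1) * Polynomial.C (X 1))
            * Polynomial.C (-(4 * C (a ^ 2)))
          + (PhiAux (P 2) * Polynomial.C (X 2) + PhiAux (P 3) * Polynomial.C (X 3))
            * Polynomial.C (2 : MvPolynomial (Fin 4) ℝ)) * Polynomial.X ^ 1 := by
    rw [hchiG]
    simp only [map_add, map_sub, map_mul, map_pow, map_one, map_neg, PhiAux, aeval_X, aeval_C,
      Polynomial.algebraMap_apply, algebraMap_eq, map_ofNat]
    ring
  -- the master coefficient equation
  have hE : PhiAux (chi P (Ga a)) = PhiAux K * PhiAux (Ga a) := by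
    rw [hK, map_mul]
  have hcoeff : ∀ n : ℕ,
      (if 3 ≤ n then ((PhiAux (P 0)).coeff (n-3) * X 0 + (PhiAux (P 1)).coeff (n-3) * X 1)
          * (4 * (X 0 ^ 2 + X 1 ^ 2)) else 0)
      + (if 1 ≤ n then ((PhiAux (P 0)).coeff (n-1) * X 0 + (PhiAux (P 1)).coeff (n-1) * X 1)
            * (-(4 * C (a ^ 2)))
          + ((PhiAux (P 2)).coeff (n-1) * X 2 + (PhiAux (P 3)).coeff (n-1) * X 3) * 2 else 0)
      = (if 4 ≤ n then (PhiAux K).coeff (n-4) * ((X 0 ^ 2 + X 1 ^ 2) ^ 2) else 0)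
        + (if 2 ≤ n then (PhiAux K).coeff (n-2)
            * (X 2 ^ 2 + X 3 ^ 2 - 2 * C (a ^ 2) * (X 0 ^ 2 + X 1 ^ 2)) else 0)
        + (PhiAux K).coeff n * (C (a ^ 2) ^ 2 - 1) := by
    intro n
    have h := congrArg (fun p => Polynomial.coeff p n) hE
    rw [hL, hG] at h
    simpa only [mul_add, ← mul_assoc, Polynomial.coeff_add, Polynomial.coeff_mul_X_pow',
      Polynomial.coeff_mul_C] using h
  -- vanishing of high coefficients of P's
  have hQ : ∀ i : Fin 4, ∀ j : ℕ, 3 ≤ j → (PhiAux (P i)).coeff j = 0 := by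
    intro i j hj
    exact PhiAux_coeff_eq_zero _ (lt_of_le_of_lt (hdeg i) (by omega))
  -- shorthand
  have h4r : (4 * (X 0 ^ 2 + X 1 ^ 2) : MvPolynomial (Fin 4) ℝ) ≠ 0 := by
    intro h
    have := congrArg (MvPolynomial.eval (fun _ => (1:ℝ))) h
    simp at this
  -- u₀ = 0
  have hu0 : (PhiAux K).coeff 0 = 0 := by
    have h := hcoeff 0
    rw [if_neg (by omega), if_neg (by omega), if_neg (by omega), if_neg (by omega)] at h
    have h' : (PhiAux K).coeff 0 * (C (a ^ 2) ^ 2 - 1) = 0 := by linear_combination -h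
    rcases mul_eq_zero.mp h' with h'' | h''
    · exact h''
    · exact absurd h'' hg0
  -- high coefficients of K vanish
  have hhigh : ∀ k d : ℕ, 2 ≤ d → (PhiAux K).natDegree < d + k → (PhiAux K).coeff d = 0 := by
    intro k
    induction k with
    | zero =>
      intro d _ hd
      exact Polynomial.coeff_eq_zero_of_natDegree_lt (by omega)
    | succ k ih =>
      intro d hd hdeg'
      have h2 := ih (d+2) (by omega) (by omega)
      have h4 := ih (d+4) (by omega) (by omega)
      have h := hcoeff (d+4)
      rw [if_pos (by omega), if_pos (by omega), if_pos (by omega), if_pos (by omega),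
        show d+4-3 = d+1 by omega, show d+4-1 = d+3 by omega, show d+4-4 = d by omega,
        show d+4-2 = d+2 by omega, hQ 0 (d+1) (by omega), hQ 1 (d+1) (by omega),
        hQ 0 (d+3) (by omega), hQ 1 (d+3) (by omega), hQ 2 (d+3) (by omega),
        hQ 3 (d+3) (by omega), h2, h4] at h
      have h' : (PhiAux K).coeff d * ((X 0 ^ 2 + X 1 ^ 2) ^ 2) = 0 := by linear_combination -h
      rcases mul_eq_zero.mp h' with h'' | h''
      · exact h''
      · exact absurd h'' (pow_ne_zero _ hr0)
  have hu2 : ∀ d, 2 ≤ d → (PhiAux K).coeff d = 0 := fun d hd =>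
    hhigh ((PhiAux K).natDegree + 1) d hd (by omega)
  -- A₁ = 0
  have hA1 : (PhiAux (P 0)).coeff 1 * X 0 + (PhiAux (P 1)).coeff 1 * X 1 = 0 := by
    have h := hcoeff 4
    rw [if_pos (by omega), if_pos (by omega), if_pos (by omega), if_pos (by omega),
      hQ 0 3 (by omega), hQ 1 3 (by omega), hQ 2 3 (by omega), hQ 3 3 (by omega),
      hu0, hu2 2 (by omega), hu2 4 (by omega)] at h
    norm_num at h
    rcases h with h' | h'
    · exact h'
    · exact absurd h' hr0
  -- 4·A₂ = u₁·r
  have hA2 : ((PhiAux (P 0)).coeff 2 * X 0 + (PhiAux (P 1)).coeff 2 * X 1) * 4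
      = (PhiAux K).coeff 1 * (X 0 ^ 2 + X 1 ^ 2) := by
    have h := hcoeff 5
    rw [if_pos (by omega), if_pos (by omega), if_pos (by omega), if_pos (by omega),
      hQ 0 4 (by omega), hQ 1 4 (by omega), hQ 2 4 (by omega), hQ 3 4 (by omega),
      hu2 3 (by omega), hu2 5 (by omega)] at h
    apply mul_right_cancel₀ hr0
    linear_combination h
  -- degree-3 and degree-1 equations
  have h3 := hcoeff 3
  rw [if_pos (by omega), if_pos (by omega), if_neg (by omega), if_pos (by omega),
    hu2 3 (by omega), show (3:ℕ)-3 = 0 by norm_num, show (3:ℕ)-1 = 2 by norm_num,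
    show (3:ℕ)-2 = 1 by norm_num] at h3
  have h1 := hcoeff 1
  rw [if_neg (by omega), if_pos (by omega), if_neg (by omega), if_neg (by omega),
    show (1:ℕ)-1 = 0 by norm_num] at h1
  -- project out x₂,x₃
  have ph3 := congrArg PiAux h3
  have ph1 := congrArg PiAux h1
  have phA2 := congrArg PiAux hA2
  simp only [map_add, map_mul, map_sub, map_pow, map_neg, map_zero, map_one, map_ofNat,
    PiAux_X0, PiAux_X1, PiAux_X2, PiAux_X3, PiAux_C, mul_zero, zero_mul, add_zero,
    zero_add] at ph3 ph1 phA2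
  -- 4·πA₀ = -ca·πu₁
  have hvA : PiAux ((PhiAux (P 0)).coeff 0) * X 0 * 4 + PiAux ((PhiAux (P 1)).coeff 0) * X 1 * 4
      = -(C a ^ 2 * PiAux ((PhiAux K).coeff 1)) := by
    apply mul_right_cancel₀ hr0
    linear_combination ph3 + C a ^ 2 * phA2
  -- πu₁ = 0
  have hv : PiAux ((PhiAux K).coeff 1) = 0 := by
    linear_combination ph1 + C a ^ 2 * hvA
  -- A₀ = 0
  have hA0 : (PhiAux (P 0)).coeff 0 * X 0 + (PhiAux (P 1)).coeff 0 * X 1 = 0 := by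
    have e0 : PiAux ((PhiAux (P 0)).coeff 0) = (PhiAux (P 0)).coeff 0 := by
      rw [PhiAux_coeff_zero, PiAux_C]
    have e1 : PiAux ((PhiAux (P 1)).coeff 0) = (PhiAux (P 1)).coeff 0 := by
      rw [PhiAux_coeff_zero, PiAux_C]
    rw [hv] at hvA
    rw [e0, e1] at hvA
    have h4' : ((PhiAux (P 0)).coeff 0 * X 0 + (PhiAux (P 1)).coeff 0 * X 1) * 4 = 0 := by
      linear_combination hvA
    rcases mul_eq_zero.mp h4' with h' | h'
    · exact h'
    · exfalso
      have := congrArg (MvPolynomial.eval (fun _ => (1:ℝ))) h'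
      simp at this
  -- conclude K·r = 2·χr
  have hfin : K * (X 0 ^ 2 + X 1 ^ 2) = 2 * chi P (X 0 ^ 2 + X 1 ^ 2) := by
    apply PhiAux_injective
    have hl : PhiAux (K * (X 0 ^ 2 + X 1 ^ 2))
        = (PhiAux K * Polynomial.C (X 0 ^ 2 + X 1 ^ 2)) * Polynomial.X ^ 2 := by
      simp only [map_mul, map_add, map_pow, PhiAux_X]
      ring
    have hr' : PhiAux (2 * chi P (X 0 ^ 2 + X 1 ^ 2))
        = ((PhiAux (P 0) * Polynomial.C (X 0) + PhiAux (P 1) * Polynomial.C (X 1))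
            * Polynomial.C (4 : MvPolynomial (Fin 4) ℝ)) * Polynomial.X ^ 1 := by
      rw [hchir]
      simp only [map_mul, map_add, map_pow, map_ofNat, PhiAux_X]
      ring
    rw [hl, hr']
    apply Polynomial.ext
    intro n
    simp only [Polynomial.coeff_mul_X_pow', Polynomial.coeff_mul_C, Polynomial.coeff_add]
    rcases n with _|_|_|_|m
    · norm_num
    · rw [if_neg (by omega), if_pos (by omega)]
      rw [show (1:ℕ) - 1 = 0 by omega, hA0]
      ring
    · rw [if_pos (by omega), if_pos (by omega)]
      rw [show (2:ℕ) - 2 = 0 by omega, show (2:ℕ) - 1 = 1 by omega, hu0, hA1]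
      ring
    · rw [if_pos (by omega), if_pos (by omega)]
      rw [show (3:ℕ) - 2 = 1 by omega, show (3:ℕ) - 1 = 2 by omega]
      linear_combination (-1 : MvPolynomial (Fin 4) ℝ) * hA2
    · rw [if_pos (by omega), if_pos (by omega),
        show m+1+1+1+1-2 = m+2 by omega, show m+1+1+1+1-1 = m+3 by omega,
        hu2 (m+2) (by omega), hQ 0 (m+3) (by omega), hQ 1 (m+3) (by omega)]
      ring
  rw [hK]
  linear_combination (Ga a) * hfin
end

section
/- There is no Hamiltonian of a cubic Kolmogorov vector field on S¹×S²: if χ = (x₁ψ₁, x₂ψ₂, x₃ψ₃, x₄ψ₄) is a vector field on S¹×S² with each ψᵢ ∈ ℝ[x₁,x₂,x₃,x₄] of degree at most 2, then there is no nonconstant polynomial H ∈ ℝ[x₁,x₂,x₃,x₄] satisfying x₁ψ₁ = −∂H/∂x₂, x₂ψ₂ = ∂H/∂x₁, x₃ψ₃ = −∂H/∂x₄ and x₄ψ₄ = ∂H/∂x₃. -/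
open MvPolynomial

/-!
The Hamiltonian equations make `∂H/∂x₁` a multiple of `x₂` and `∂H/∂x₂` a multiple of `x₁`
(likewise for `x₃, x₄`), so a monomial of `H` contains `x₁` iff it contains `x₂`, and `x₃` iff it
contains `x₄`; as the partial derivatives have degree at most `3`, `H` has degree at most `4`.
This leaves `H = c₀ + x₁x₂ p(x₁, x₂) + x₃x₄ q(x₃, x₄) + d x₁x₂x₃x₄` with `deg p, deg q ≤ 2`.
For the Hamiltonian field of `H`, `χG_a = 4(x₁² + x₂² - a²)(x₂∂₁ - x₁∂₂)H + 2(x₄∂₃ - x₃∂₄)H`,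
which must vanish on `S¹ × S²`. On the circles `x₁² + x₂² = a² ± 1`, `x₃ = x₄ = 0` this forces `p = 0`;
then on the slices `x₁ = 0` it forces `q = 0`, and one more point gives `d = 0`.
-/

section PartialDerivatives

variable {σ R : Type*} [CommRing R] [NoZeroDivisors R] [CharZero R]

theorem sub_single_mem_support_pderiv {H : MvPolynomial σ R} {m : σ →₀ ℕ} {i : σ}
    (hm : m ∈ H.support) (hi : m i ≠ 0) :
    m - Finsupp.single i 1 ∈ (pderiv i H).support := by
  have hle : Finsupp.single i 1 ≤ m := Finsupp.single_le_iff.mpr (Nat.one_le_iff_ne_zero.mpr hi)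
  rw [mem_support_iff, coeff_pderiv, tsub_add_cancel_of_le hle]
  exact mul_ne_zero (mem_support_iff.mp hm) (Nat.cast_add_one_ne_zero _)

theorem ne_zero_of_pderiv_eq_X_mul {H q : MvPolynomial σ R} {i j : σ} (hij : i ≠ j)
    (h : pderiv i H = X j * q) {m : σ →₀ ℕ} (hm : m ∈ H.support) (hi : m i ≠ 0) :
    m j ≠ 0 := by
  have hmem := sub_single_mem_support_pderiv hm hi
  rw [h, support_X_mul, Finset.mem_map] at hmem
  obtain ⟨n, -, hn⟩ := hmem
  have hj : 1 + n j = m j := by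
    simpa [Finsupp.single_eq_of_ne' hij] using DFunLike.congr_fun hn j
  omega

theorem degree_le_of_totalDegree_pderiv_le {H : MvPolynomial σ R} {n : ℕ}
    (h : ∀ i, (pderiv i H).totalDegree ≤ n) {m : σ →₀ ℕ} (hm : m ∈ H.support) :
    m.degree ≤ n + 1 := by
  obtain rfl | hm0 := eq_or_ne m 0
  · simp
  obtain ⟨i, hi⟩ : ∃ i, m i ≠ 0 := by simpa [Finsupp.ext_iff] using hm0
  have hle : Finsupp.single i 1 ≤ m := Finsupp.single_le_iff.mpr (Nat.one_le_iff_ne_zero.mpr hi)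
  have hsub : (m - Finsupp.single i 1).degree ≤ n :=
    (le_totalDegree (sub_single_mem_support_pderiv hm hi)).trans (h i)
  calc m.degree = (m - Finsupp.single i 1 + Finsupp.single i 1).degree := by
        rw [tsub_add_cancel_of_le hle]
    _ ≤ n + 1 := by rw [map_add, Finsupp.degree_single]; omega

end PartialDerivatives

def hamiltonianExponents : Finset (Fin 4 → ℕ) :=
  {![0, 0, 0, 0], ![1, 1, 0, 0], ![2, 1, 0, 0], ![1, 2, 0, 0], ![3, 1, 0, 0], ![2, 2, 0, 0],
    ![1, 3, 0, 0], ![0, 0, 1, 1], ![0, 0, 2, 1], ![0, 0, 1, 2], ![0, 0, 3, 1], ![0, 0, 2, 2],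
    ![0, 0, 1, 3], ![1, 1, 1, 1]}

theorem mem_hamiltonianExponents {m : Fin 4 → ℕ} (h01 : m 0 = 0 ↔ m 1 = 0)
    (h23 : m 2 = 0 ↔ m 3 = 0) (hdeg : m 0 + m 1 + m 2 + m 3 ≤ 4) :
    m ∈ hamiltonianExponents := by
  have hbounded : ∀ i ∈ Finset.range 5, ∀ j ∈ Finset.range 5, ∀ k ∈ Finset.range 5,
      ∀ l ∈ Finset.range 5, (i = 0 ↔ j = 0) → (k = 0 ↔ l = 0) → i + j + k + l ≤ 4 →
      ![i, j, k, l] ∈ hamiltonianExponents := by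
    decide
  have hm : m = ![m 0, m 1, m 2, m 3] := by
    ext i; fin_cases i <;> rfl
  rw [hm]
  simp only [Finset.mem_range] at hbounded
  exact hbounded _ (by omega) _ (by omega) _ (by omega) _ (by omega) h01 h23 hdeg

theorem mem_hamiltonianExponents_of_mem_support {ψ : Fin 4 → MvPolynomial (Fin 4) ℝ}
    (hdeg : ∀ i, (ψ i).totalDegree ≤ 2) {H : MvPolynomial (Fin 4) ℝ}
    (h0 : X 0 * ψ 0 = -pderiv 1 H) (h1 : X 1 * ψ 1 = pderiv 0 H)
    (h2 : X 2 * ψ 2 = -pderiv 3 H) (h3 : X 3 * ψ 3 = pderiv 2 H)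
    {m : Fin 4 →₀ ℕ} (hm : m ∈ H.support) : ⇑m ∈ hamiltonianExponents := by
  have d0 : pderiv 0 H = X 1 * ψ 1 := h1.symm
  have d1 : pderiv 1 H = X 0 * -ψ 0 := by rw [mul_neg, h0, neg_neg]
  have d2 : pderiv 2 H = X 3 * ψ 3 := h3.symm
  have d3 : pderiv 3 H = X 2 * -ψ 2 := by rw [mul_neg, h2, neg_neg]
  have hX (i : Fin 4) {q : MvPolynomial (Fin 4) ℝ} (hq : q.totalDegree ≤ 2) :
      (X i * q).totalDegree ≤ 3 :=
    (totalDegree_mul _ _).trans (by rw [totalDegree_X]; omega)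
  have hdegH : ∀ i, (pderiv i H).totalDegree ≤ 3 := by
    intro i
    fin_cases i
    · exact d0 ▸ hX 1 (hdeg 1)
    · exact d1 ▸ hX 0 ((totalDegree_neg _).trans_le (hdeg 0))
    · exact d2 ▸ hX 3 (hdeg 3)
    · exact d3 ▸ hX 2 ((totalDegree_neg _).trans_le (hdeg 2))
  have hsum := degree_le_of_totalDegree_pderiv_le hdegH hm
  rw [Finsupp.degree_eq_sum, Fin.sum_univ_four] at hsum
  refine mem_hamiltonianExponents ⟨fun h => ?_, fun h => ?_⟩ ⟨fun h => ?_, fun h => ?_⟩ hsum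
  · exact not_imp_not.mp (ne_zero_of_pderiv_eq_X_mul (by decide) d1 hm) h
  · exact not_imp_not.mp (ne_zero_of_pderiv_eq_X_mul (by decide) d0 hm) h
  · exact not_imp_not.mp (ne_zero_of_pderiv_eq_X_mul (by decide) d3 hm) h
  · exact not_imp_not.mp (ne_zero_of_pderiv_eq_X_mul (by decide) d2 hm) h

noncomputable def planeQuartic (c : Fin 6 → ℝ) (i j : Fin 4) : MvPolynomial (Fin 4) ℝ :=
  X i * X j * (C (c 0) + C (c 1) * X i + C (c 2) * X j + C (c 3) * X i ^ 2
    + C (c 4) * (X i * X j) + C (c 5) * X j ^ 2)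

noncomputable def hamiltonianNormalForm (c₀ : ℝ) (c e : Fin 6 → ℝ) (d : ℝ) :
    MvPolynomial (Fin 4) ℝ :=
  C c₀ + planeQuartic c 0 1 + planeQuartic e 2 3 + C d * (X 0 * X 1 * X 2 * X 3)

theorem monomial_equivFunOnFinite_symm (m : Fin 4 → ℕ) (r : ℝ) :
    monomial (Finsupp.equivFunOnFinite.symm m) r
      = C r * X 0 ^ m 0 * X 1 ^ m 1 * X 2 ^ m 2 * X 3 ^ m 3 := by
  rw [monomial_eq, Finsupp.prod_fintype _ _ (fun _ => pow_zero _), Fin.prod_univ_four]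
  simp only [Finsupp.coe_equivFunOnFinite_symm, mul_assoc]

theorem exists_eq_hamiltonianNormalForm {H : MvPolynomial (Fin 4) ℝ}
    (hH : ∀ m ∈ H.support, ⇑m ∈ hamiltonianExponents) :
    ∃ c₀ c e d, H = hamiltonianNormalForm c₀ c e d := by
  set κ : (Fin 4 → ℕ) → ℝ := fun m => coeff (Finsupp.equivFunOnFinite.symm m) H
  refine ⟨κ ![0, 0, 0, 0],
    ![κ ![1, 1, 0, 0], κ ![2, 1, 0, 0], κ ![1, 2, 0, 0], κ ![3, 1, 0, 0], κ ![2, 2, 0, 0],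
      κ ![1, 3, 0, 0]],
    ![κ ![0, 0, 1, 1], κ ![0, 0, 2, 1], κ ![0, 0, 1, 2], κ ![0, 0, 3, 1], κ ![0, 0, 2, 2],
      κ ![0, 0, 1, 3]],
    κ ![1, 1, 1, 1], ?_⟩
  calc H = ∑ m ∈ H.support, monomial m (coeff m H) := as_sum H
    _ = ∑ m ∈ hamiltonianExponents.map Finsupp.equivFunOnFinite.symm.toEmbedding,
          monomial m (coeff m H) := by
        refine Finset.sum_subset (fun m hm => ?_) (fun m _ hm => ?_)
        · exact Finset.mem_map_equiv.mpr (hH m hm)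
        · rw [notMem_support_iff.mp hm, monomial_zero]
    _ = ∑ m ∈ hamiltonianExponents, C (κ m) * X 0 ^ m 0 * X 1 ^ m 1 * X 2 ^ m 2 * X 3 ^ m 3 := by
        simp only [Finset.sum_map, Equiv.coe_toEmbedding, monomial_equivFunOnFinite_symm, κ]
    _ = _ := by
        simp [hamiltonianExponents, Finset.sum_insert, hamiltonianNormalForm, planeQuartic]
        ring

theorem chi_Ga_of_hamiltonian (a : ℝ) {P : Fin 4 → MvPolynomial (Fin 4) ℝ}
    {H : MvPolynomial (Fin 4) ℝ} (h0 : P 0 = -pderiv 1 H) (h1 : P 1 = pderiv 0 H)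
    (h2 : P 2 = -pderiv 3 H) (h3 : P 3 = pderiv 2 H) :
    chi P (Ga a) = 4 * (X 0 ^ 2 + X 1 ^ 2 - C (a ^ 2)) * (X 1 * pderiv 0 H - X 0 * pderiv 1 H)
      + 2 * (X 3 * pderiv 2 H - X 2 * pderiv 3 H) := by
  simp [chi, Fin.sum_univ_four, Ga, h0, h1, h2, h3, pderiv_X, Pi.single_apply]
  ring

/-- `(y ∂ₓ - x ∂_y)` applied to `x y (c₀ + c₁ x + c₂ y + c₃ x² + c₄ x y + c₅ y²)`. -/
noncomputable def planeQuarticRot (c : Fin 6 → ℝ) (x y : ℝ) : ℝ :=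
  c 0 * (y ^ 2 - x ^ 2) + c 1 * x * (2 * y ^ 2 - x ^ 2) + c 2 * y * (y ^ 2 - 2 * x ^ 2)
    + c 3 * x ^ 2 * (3 * y ^ 2 - x ^ 2) + 2 * c 4 * x * y * (y ^ 2 - x ^ 2)
    + c 5 * y ^ 2 * (y ^ 2 - 3 * x ^ 2)

theorem planeQuarticRot_zero (x y : ℝ) : planeQuarticRot 0 x y = 0 := by
  simp [planeQuarticRot]

theorem planeQuarticRot_apply_zero_zero (c : Fin 6 → ℝ) : planeQuarticRot c 0 0 = 0 := by
  simp [planeQuarticRot]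

noncomputable def normalFormChiGa (a : ℝ) (c e : Fin 6 → ℝ) (d : ℝ) (x : Fin 4 → ℝ) : ℝ :=
  4 * (x 0 ^ 2 + x 1 ^ 2 - a ^ 2)
      * (planeQuarticRot c (x 0) (x 1) + d * x 2 * x 3 * (x 1 ^ 2 - x 0 ^ 2))
    + 2 * (planeQuarticRot e (x 2) (x 3) + d * x 0 * x 1 * (x 3 ^ 2 - x 2 ^ 2))

theorem eval_chi_Ga_hamiltonianNormalForm {a c₀ d : ℝ} {c e : Fin 6 → ℝ}
    {P : Fin 4 → MvPolynomial (Fin 4) ℝ}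
    (h0 : P 0 = -pderiv 1 (hamiltonianNormalForm c₀ c e d))
    (h1 : P 1 = pderiv 0 (hamiltonianNormalForm c₀ c e d))
    (h2 : P 2 = -pderiv 3 (hamiltonianNormalForm c₀ c e d))
    (h3 : P 3 = pderiv 2 (hamiltonianNormalForm c₀ c e d)) (x : Fin 4 → ℝ) :
    eval x (chi P (Ga a)) = normalFormChiGa a c e d x := by
  rw [chi_Ga_of_hamiltonian a h0 h1 h2 h3]
  simp [hamiltonianNormalForm, planeQuartic, pderiv_X, normalFormChiGa, planeQuarticRot]
  ring

theorem eq_zero_of_planeQuarticRot_eq_zero {c : Fin 6 → ℝ} {ρ ρ' : ℝ} (hρ : ρ ≠ 0)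
    (hρ' : ρ' ≠ 0) (hρρ' : ρ ^ 2 ≠ ρ' ^ 2)
    (hcircle : ∀ x y, x ^ 2 + y ^ 2 = ρ ^ 2 → planeQuarticRot c x y = 0)
    (hpoint : planeQuarticRot c ρ' 0 = 0) : c = 0 := by
  have e₁ := hcircle ρ 0 (by ring)
  have e₂ := hcircle (-ρ) 0 (by ring)
  have e₃ := hcircle 0 ρ (by ring)
  have e₄ := hcircle 0 (-ρ) (by ring)
  have e₅ := hcircle (3 * ρ / 5) (4 * ρ / 5) (by ring)
  simp only [planeQuarticRot] at e₁ e₂ e₃ e₄ e₅ hpoint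
  have hc1 : c 1 = 0 := by
    have : c 1 * ρ ^ 3 = 0 := by linear_combination (e₂ - e₁) / 2
    simpa [hρ] using this
  have hc2 : c 2 = 0 := by
    have : c 2 * ρ ^ 3 = 0 := by linear_combination (e₃ - e₄) / 2
    simpa [hρ] using this
  rw [hc1] at e₁ hpoint
  -- one circle only sees `c 0 + c 3 * ρ ^ 2`; the second radius separates the two
  have hc3 : c 3 = 0 := by
    have : c 3 * (ρ ^ 2 * ρ' ^ 2 * (ρ ^ 2 - ρ' ^ 2)) = 0 := by
      linear_combination ρ ^ 2 * hpoint - ρ' ^ 2 * e₁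
    simpa [hρ, hρ', sub_eq_zero, hρρ'] using this
  rw [hc3] at e₁
  have hc0 : c 0 = 0 := by
    have : c 0 * ρ ^ 2 = 0 := by linear_combination -e₁
    simpa [hρ] using this
  rw [hc0, hc2] at e₃
  have hc5 : c 5 = 0 := by
    have : c 5 * ρ ^ 4 = 0 := by linear_combination e₃
    simpa [hρ] using this
  rw [hc0, hc1, hc2, hc3, hc5] at e₅
  have hc4 : c 4 = 0 := by
    have : c 4 * ρ ^ 4 = 0 := by linear_combination (625 / 168) * e₅
    simpa [hρ] using this
  funext i
  fin_cases i <;> assumption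

theorem eval_Ga (a : ℝ) (x : Fin 4 → ℝ) :
    eval x (Ga a) = (x 0 ^ 2 + x 1 ^ 2 - a ^ 2) ^ 2 + x 2 ^ 2 + x 3 ^ 2 - 1 := by
  simp [Ga]

theorem coeffs₀₁_eq_zero {a d : ℝ} {c e : Fin 6 → ℝ} (ha : 1 < a)
    (hS : ∀ x, eval x (Ga a) = 0 → normalFormChiGa a c e d x = 0) : c = 0 := by
  have hsq : 0 < a ^ 2 - 1 := by nlinarith
  have hρ : √(a ^ 2 + 1) ^ 2 = a ^ 2 + 1 := Real.sq_sqrt (by positivity)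
  have hρ' : √(a ^ 2 - 1) ^ 2 = a ^ 2 - 1 := Real.sq_sqrt hsq.le
  refine eq_zero_of_planeQuarticRot_eq_zero (ρ := √(a ^ 2 + 1)) (ρ' := √(a ^ 2 - 1))
    (by positivity) (by positivity) (by rw [hρ, hρ']; linarith) (fun x y hxy => ?_) ?_
  · have := hS ![x, y, 0, 0] (by simp [eval_Ga, hxy, hρ])
    simpa [normalFormChiGa, planeQuarticRot_apply_zero_zero, hxy, hρ] using this
  · have := hS ![√(a ^ 2 - 1), 0, 0, 0] (by simp [eval_Ga, hρ'])
    simpa [normalFormChiGa, planeQuarticRot_apply_zero_zero, hρ'] using this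

theorem coeffs₂₃_eq_zero {a d : ℝ} {e : Fin 6 → ℝ}
    (hS : ∀ x, eval x (Ga a) = 0 → normalFormChiGa a 0 e d x = 0) : e = 0 := by
  have hsq : (0 : ℝ) ≤ a ^ 2 + 3 / 5 := by positivity
  refine eq_zero_of_planeQuarticRot_eq_zero (ρ := 1) (ρ' := 4 / 5) one_ne_zero (by norm_num)
    (by norm_num) (fun x y hxy => ?_) ?_
  · have := hS ![0, a, x, y] (by simp [eval_Ga]; linarith)
    simpa [normalFormChiGa, planeQuarticRot_zero] using this
  · have := hS ![0, √(a ^ 2 + 3 / 5), 4 / 5, 0] (by simp [eval_Ga, Real.sq_sqrt hsq]; norm_num)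
    simpa [normalFormChiGa, planeQuarticRot_zero] using this

theorem coeff₀₁₂₃_eq_zero {a d : ℝ} (ha : a ≠ 0)
    (hS : ∀ x, eval x (Ga a) = 0 → normalFormChiGa a 0 0 d x = 0) : d = 0 := by
  have h := hS ![3 * a / 5, 4 * a / 5, 3 / 5, 4 / 5] (by simp [eval_Ga]; ring)
  simp only [normalFormChiGa, Matrix.cons_val_zero, Matrix.cons_val_one, Matrix.cons_val,
    planeQuarticRot_zero, zero_add] at h
  have : d * a ^ 2 = 0 := by linear_combination (625 / 168) * h
  simpa [ha] using this

theorem stmt_6 (a : ℝ) (ha : 1 < a) (ψ : Fin 4 → MvPolynomial (Fin 4) ℝ)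
    (hdeg : ∀ i, (ψ i).totalDegree ≤ 2)
    (hvf : ∃ K : MvPolynomial (Fin 4) ℝ,
      chi (fun i => X i * ψ i) (Ga a) = K * Ga a) :
    ¬ ∃ H : MvPolynomial (Fin 4) ℝ, (¬ ∃ c : ℝ, H = C c) ∧
      X 0 * ψ 0 = -(pderiv 1 H) ∧
      X 1 * ψ 1 = pderiv 0 H ∧
      X 2 * ψ 2 = -(pderiv 3 H) ∧
      X 3 * ψ 3 = pderiv 2 H := by
  rintro ⟨H, hH, h0, h1, h2, h3⟩
  obtain ⟨K, hK⟩ := hvf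
  obtain ⟨c₀, c, e, d, rfl⟩ := exists_eq_hamiltonianNormalForm
    fun m hm => mem_hamiltonianExponents_of_mem_support hdeg h0 h1 h2 h3 hm
  have hS : ∀ x, eval x (Ga a) = 0 → normalFormChiGa a c e d x = 0 := fun x hx => by
    rw [← eval_chi_Ga_hamiltonianNormalForm (P := fun i => X i * ψ i) h0 h1 h2 h3, hK,
      eval_mul, hx, mul_zero]
  obtain rfl := coeffs₀₁_eq_zero ha hS
  obtain rfl := coeffs₂₃_eq_zero hS
  obtain rfl := coeff₀₁₂₃_eq_zero (by positivity) hS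
  exact hH ⟨c₀, by simp [hamiltonianNormalForm, planeQuartic]⟩
end

section
/- Let χ = (P₁,P₂,P₃,P₄) be a polynomial vector field in ℝ⁴ whose components are all homogeneous polynomials of degree n (a Type-n vector field). Then χ is a vector field on S¹×S² if and only if there exist polynomials A, B ∈ ℝ[x₁,x₂,x₃,x₄] such that P₁ = A·x₂, P₂ = −A·x₁, P₃ = B·x₄ and P₄ = −B·x₃. -/
open MvPolynomial

/-!
With `r = x₁² + x₂²`, `χG_a = 4 (r - a²) Q₁ + 2 Q₂` where `Q₁ = x₁P₁ + x₂P₂` and `Q₂ = x₃P₃ + x₄P₄`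
are homogeneous of degree `n + 1`, so `χG_a` only has homogeneous components of degrees `n + 1` and
`n + 3`. Substituting `x ↦ t x` turns homogeneous components into coefficients of powers of `t`.
`G_a` becomes a polynomial in `t` of degree 4 with constant term `a⁴ - 1 ≠ 0`, and the top and
bottom `t`-degrees of a nonzero multiple of such a polynomial are at least 4 apart; hence
`χG_a = 0`, i.e. `Q₁ = Q₂ = 0`. Finally `x₁P₁ + x₂P₂ = 0` with `x₂` prime gives `P₁ = A x₂`, `P₂ = -A x₁`.
-/

namespace Polynomial

variable {R : Type*} [Semiring R] [NoZeroDivisors R]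

lemma natDegree_add_natTrailingDegree_le_of_dvd {f g : R[X]} (hgf : g ∣ f) (hf : f ≠ 0)
    (hg : g.coeff 0 ≠ 0) : g.natDegree + f.natTrailingDegree ≤ f.natDegree := by
  obtain ⟨k, rfl⟩ := hgf
  have hg₀ : g ≠ 0 := by rintro rfl; exact hg (coeff_zero 0)
  have hk : k ≠ 0 := by rintro rfl; exact hf (mul_zero g)
  have hg_trailing : g.natTrailingDegree = 0 := Nat.le_zero.mp (natTrailingDegree_le_of_ne_zero hg)
  rw [natDegree_mul hg₀ hk, natTrailingDegree_mul hg₀ hk, hg_trailing, zero_add]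
  exact Nat.add_le_add_left (natTrailingDegree_le_natDegree k) _

lemma eq_zero_of_dvd_C_mul_X_pow_add_C_mul_X_pow {g : R[X]} {u v : R} {l m : ℕ}
    (hdvd : g ∣ C u * X ^ l + C v * X ^ m) (hg : g.coeff 0 ≠ 0) (hml : m < l)
    (hl : l < m + g.natDegree) : u = 0 ∧ v = 0 := by
  set f := C u * X ^ l + C v * X ^ m
  have hf : f = 0 := by
    by_contra hf
    have h_deg : f.natDegree ≤ l := by
      refine (natDegree_add_le _ _).trans (max_le ?_ ?_)
      · exact natDegree_C_mul_X_pow_le u l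
      · exact (natDegree_C_mul_X_pow_le v m).trans hml.le
    have h_trailing : m ≤ f.natTrailingDegree := by
      refine le_natTrailingDegree hf fun k hk => ?_
      simp only [f, coeff_add, coeff_C_mul_X_pow, if_neg (by omega : k ≠ l),
        if_neg (by omega : k ≠ m), add_zero]
    have := natDegree_add_natTrailingDegree_le_of_dvd hdvd hf hg
    omega
  have hu := congrArg (coeff · l) hf
  have hv := congrArg (coeff · m) hf
  simp only [f, coeff_add, coeff_C_mul_X_pow, if_pos, if_neg hml.ne', if_neg hml.ne,
    add_zero, zero_add, coeff_zero] at hu hv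
  exact ⟨hu, hv⟩

end Polynomial

namespace MvPolynomial

variable {σ R : Type*}

section dilation

variable [CommSemiring R]

noncomputable def dilation : MvPolynomial σ R →ₐ[R] Polynomial (MvPolynomial σ R) :=
  aeval fun i => Polynomial.C (X i) * Polynomial.X

lemma dilation_monomial (v : σ →₀ ℕ) (c : R) :
    dilation (monomial v c) = Polynomial.C (monomial v c) * Polynomial.X ^ v.degree := by
  simp only [dilation, monomial_eq, map_mul, aeval_C, Finsupp.prod, map_prod, map_pow, aeval_X,
    mul_pow, Finset.prod_mul_distrib, Finset.prod_pow_eq_pow_sum, Polynomial.algebraMap_apply,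
    algebraMap_eq, Finsupp.degree_apply]
  ring

@[simp]
lemma dilation_X (i : σ) : dilation (X i : MvPolynomial σ R) = Polynomial.C (X i) * Polynomial.X :=
  aeval_X _ i

@[simp]
lemma dilation_C (c : R) : dilation (C c : MvPolynomial σ R) = Polynomial.C (C c) :=
  aeval_C _ c

lemma IsHomogeneous.dilation_eq {p : MvPolynomial σ R} {d : ℕ} (h : p.IsHomogeneous d) :
    dilation p = Polynomial.C p * Polynomial.X ^ d := by
  conv_lhs => rw [p.as_sum]
  conv_rhs => rw [p.as_sum]
  rw [map_sum, map_sum, Finset.sum_mul]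
  refine Finset.sum_congr rfl fun v hv => ?_
  rw [dilation_monomial, Finsupp.degree_apply, ← h.degree_eq_sum_deg_support hv]

end dilation

lemma IsHomogeneous.X_mul_add_X_mul [CommSemiring R] {p q : MvPolynomial σ R} {n : ℕ}
    (hp : p.IsHomogeneous n) (hq : q.IsHomogeneous n) (i j : σ) :
    (X i * p + X j * q).IsHomogeneous (n + 1) := by
  rw [add_comm n]
  exact ((isHomogeneous_X R i).mul hp).add ((isHomogeneous_X R j).mul hq)

lemma exists_of_X_mul_add_X_mul_eq_zero [CommRing R] [IsDomain R] {i j : σ} (hij : i ≠ j)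
    {p q : MvPolynomial σ R} (h : X i * p + X j * q = 0) :
    ∃ A, p = A * X j ∧ q = -A * X i := by
  have hdvd : (X j : MvPolynomial σ R) ∣ X i * p := ⟨-q, by linear_combination h⟩
  obtain ⟨A, rfl⟩ := (X_dvd_mul_iff.mp hdvd).resolve_left (by simpa using hij.symm)
  refine ⟨A, mul_comm _ _, ?_⟩
  have h' : X j * (X i * A + q) = 0 := by linear_combination h
  linear_combination (mul_eq_zero.mp h').resolve_left (X_ne_zero j)

end MvPolynomial

lemma chi_Ga (a : ℝ) (P : Fin 4 → MvPolynomial (Fin 4) ℝ) :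
    chi P (Ga a) = 4 * (X 0 ^ 2 + X 1 ^ 2 - C (a ^ 2)) * (X 0 * P 0 + X 1 * P 1)
      + 2 * (X 2 * P 2 + X 3 * P 3) := by
  simp only [chi, Ga, Fin.sum_univ_four, map_sub, map_add, Derivation.leibniz_pow, pderiv_X,
    Pi.single_apply, derivation_C, Derivation.map_one_eq_zero, smul_eq_mul, nsmul_eq_mul,
    Fin.reduceEq, ↓reduceIte, mul_one, mul_zero, add_zero, zero_add, sub_zero]
  ring

lemma dilation_Ga (a : ℝ) :
    dilation (Ga a) = Polynomial.C ((X 0 ^ 2 + X 1 ^ 2) ^ 2) * Polynomial.X ^ 4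
      + Polynomial.C (X 2 ^ 2 + X 3 ^ 2 - C (2 * a ^ 2) * (X 0 ^ 2 + X 1 ^ 2)) * Polynomial.X ^ 2
      + Polynomial.C (C (a ^ 4 - 1)) := by
  simp only [Ga, map_add, map_sub, map_pow, map_mul, map_one, map_ofNat, dilation_X, dilation_C]
  ring

lemma eq_zero_of_eq_mul_Ga {a : ℝ} (ha : a ^ 4 ≠ 1) {n : ℕ}
    {Q₁ Q₂ K : MvPolynomial (Fin 4) ℝ} (hQ₁ : Q₁.IsHomogeneous (n + 1))
    (hQ₂ : Q₂.IsHomogeneous (n + 1))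
    (h : 4 * (X 0 ^ 2 + X 1 ^ 2 - C (a ^ 2)) * Q₁ + 2 * Q₂ = K * Ga a) :
    Q₁ = 0 ∧ Q₂ = 0 := by
  have hdvd : dilation (Ga a) ∣ Polynomial.C (4 * (X 0 ^ 2 + X 1 ^ 2) * Q₁) * Polynomial.X ^ (n + 3)
      + Polynomial.C (2 * Q₂ - 4 * C (a ^ 2) * Q₁) * Polynomial.X ^ (n + 1) := by
    refine ⟨dilation K, ?_⟩
    rw [← map_mul, mul_comm (Ga a), ← h]
    simp only [map_add, map_sub, map_mul, map_pow, map_ofNat, dilation_X, dilation_C,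
      hQ₁.dilation_eq, hQ₂.dilation_eq]
    ring
  have hr : (X 0 ^ 2 + X 1 ^ 2 : MvPolynomial (Fin 4) ℝ) ≠ 0 := fun hr => by
    simpa using congrArg (eval fun _ => 1) hr
  have hcoeff_zero : (dilation (Ga a)).coeff 0 ≠ 0 := by
    rw [dilation_Ga]
    simp only [Polynomial.coeff_add, Polynomial.coeff_C_mul_X_pow, Polynomial.coeff_C,
      Nat.reduceEqDiff, ↓reduceIte, zero_add]
    rwa [Ne, C_eq_zero, sub_eq_zero]
  have hcoeff_four : (dilation (Ga a)).coeff 4 ≠ 0 := by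
    rw [dilation_Ga]
    simp only [Polynomial.coeff_add, Polynomial.coeff_C_mul_X_pow, Polynomial.coeff_C]
    simpa using hr
  have hdeg := Polynomial.le_natDegree_of_ne_zero hcoeff_four
  obtain ⟨h₁, h₂⟩ := Polynomial.eq_zero_of_dvd_C_mul_X_pow_add_C_mul_X_pow hdvd hcoeff_zero
    (by omega) (by omega)
  have hQ₁_zero : Q₁ = 0 := by simpa [hr] using h₁
  exact ⟨hQ₁_zero, by simpa [hQ₁_zero] using h₂⟩

theorem stmt_8 (a : ℝ) (ha : 1 < a) (n : ℕ) (P : Fin 4 → MvPolynomial (Fin 4) ℝ)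
    (hhom : ∀ i, (P i).IsHomogeneous n) :
    (∃ K : MvPolynomial (Fin 4) ℝ, chi P (Ga a) = K * Ga a) ↔
      ∃ A B : MvPolynomial (Fin 4) ℝ,
        P 0 = A * X 1 ∧ P 1 = -A * X 0 ∧ P 2 = B * X 3 ∧ P 3 = -B * X 2 := by
  constructor
  · rintro ⟨K, hK⟩
    rw [chi_Ga] at hK
    have ha4 : a ^ 4 ≠ 1 := (one_lt_pow₀ ha four_ne_zero).ne'
    obtain ⟨hQ₁, hQ₂⟩ := eq_zero_of_eq_mul_Ga ha4
      ((hhom 0).X_mul_add_X_mul (hhom 1) 0 1) ((hhom 2).X_mul_add_X_mul (hhom 3) 2 3) hK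
    obtain ⟨A, hA₀, hA₁⟩ := exists_of_X_mul_add_X_mul_eq_zero (by decide) hQ₁
    obtain ⟨B, hB₂, hB₃⟩ := exists_of_X_mul_add_X_mul_eq_zero (by decide) hQ₂
    exact ⟨A, B, hA₀, hA₁, hB₂, hB₃⟩
  · rintro ⟨A, B, h₀, h₁, h₂, h₃⟩
    exact ⟨0, by rw [chi_Ga, h₀, h₁, h₂, h₃]; ring⟩
end

section
/- There exists no Pseudo Type-n vector field on S¹×S²: there are no nonzero homogeneous polynomials P₁, P₂, P₃ ∈ ℝ[x₁,x₂,x₃,x₄] of degree n such that the vector field χ = (P₁,P₂,P₃,0) is a vector field on S¹×S². -/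
open MvPolynomial

/-!
Substitute `x ↦ t x` and read `χG_a = K G_a` as an identity of polynomials in `t`. Since `P₄ = 0`,
`χG_a` only has homogeneous components of degrees `n + 3` and `n + 1`, namely `4 S L` and
`2 x₃ P₃ - 4 a² L` with `S = x₁² + x₂²` and `L = x₁ P₁ + x₂ P₂`. On the other side `G_a` has
nonzero components in degrees `4` and `0` (the latter is `a⁴ - 1`), so the lowest and highest
degrees of `K G_a` are at least `4` apart unless `K = 0`. Hence both components of `χG_a` vanish:
`S L = 0` gives `L = 0`, and then `x₃ P₃ = 0`.
-/

namespace MvPolynomial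

variable {σ R : Type*} [CommSemiring R]

/-- `scaleVars P` is `P (t • x)`, as a polynomial in `t`. -/
noncomputable def scaleVars : MvPolynomial σ R →ₐ[R] Polynomial (MvPolynomial σ R) :=
  aeval fun i => Polynomial.C (X i) * Polynomial.X

lemma scaleVars_monomial (d : σ →₀ ℕ) (r : R) :
    scaleVars (monomial d r) = Polynomial.C (monomial d r) * Polynomial.X ^ d.degree := by
  rw [scaleVars, aeval_monomial, Finsupp.prod]
  simp only [mul_pow, Finset.prod_mul_distrib, Finset.prod_pow_eq_pow_sum, ← Polynomial.C_pow,
    ← map_prod]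
  rw [monomial_eq, Finsupp.prod, Polynomial.C_mul, Polynomial.algebraMap_apply, algebraMap_eq,
    Finsupp.degree_apply, mul_assoc]

lemma IsHomogeneous.scaleVars_eq {P : MvPolynomial σ R} {m : ℕ} (hP : P.IsHomogeneous m) :
    scaleVars P = Polynomial.C P * Polynomial.X ^ m := by
  conv_lhs => rw [P.as_sum]
  conv_rhs => rw [P.as_sum, map_sum, Finset.sum_mul]
  refine (map_sum _ _ _).trans (Finset.sum_congr rfl fun d hd => ?_)
  rw [scaleVars_monomial, Finsupp.degree_apply, ← hP.degree_eq_sum_deg_support hd]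

end MvPolynomial

namespace Polynomial

variable {R : Type*} [Semiring R] [NoZeroDivisors R]

lemma eq_zero_and_eq_zero_of_mul_eq_C_mul_X_pow_add {q g : R[X]} {a b : R} {n k : ℕ} (hk : 0 < k)
    (hg₀ : g.coeff 0 ≠ 0) (hgk : k < g.natDegree)
    (h : q * g = C a * X ^ (n + k) + C b * X ^ n) : a = 0 ∧ b = 0 := by
  suffices hq : q = 0 by
    rw [hq, zero_mul] at h
    have ha := congrArg (coeff · (n + k)) h
    have hb := congrArg (coeff · n) h
    simp only [coeff_add, coeff_C_mul_X_pow, coeff_zero, if_true, if_neg (show n + k ≠ n by omega),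
      if_neg (show n ≠ n + k by omega), add_zero, zero_add] at ha hb
    exact ⟨ha.symm, hb.symm⟩
  by_contra hq
  have hg : g ≠ 0 := fun h0 => hg₀ (by simp [h0])
  have hdeg : (q * g).natDegree ≤ n + k := h ▸ natDegree_add_le_of_degree_le
    (natDegree_C_mul_X_pow_le a _) ((natDegree_C_mul_X_pow_le b n).trans (by omega))
  have htrail : n ≤ (q * g).natTrailingDegree := le_natTrailingDegree (mul_ne_zero hq hg)
    fun m hm => by simp [h, hm.ne, show m ≠ n + k by omega]
  rw [natDegree_mul hq hg] at hdeg
  rw [natTrailingDegree_mul hq hg, natTrailingDegree_eq_zero.mpr (Or.inr hg₀), add_zero] at htrail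
  have := natTrailingDegree_le_natDegree q
  omega

end Polynomial

section

variable (a : ℝ) {n : ℕ} {P₁ P₂ P₃ : MvPolynomial (Fin 4) ℝ}

lemma isHomogeneous_X_zero_sq_add_X_one_sq :
    (X 0 ^ 2 + X 1 ^ 2 : MvPolynomial (Fin 4) ℝ).IsHomogeneous 2 :=
  (isHomogeneous_X_pow _ 2).add (isHomogeneous_X_pow _ 2)

lemma scaleVars_Ga : scaleVars (Ga a) =
    Polynomial.C ((X 0 ^ 2 + X 1 ^ 2) ^ 2) * Polynomial.X ^ 4
      + Polynomial.C (X 2 ^ 2 + X 3 ^ 2 - C (2 * a ^ 2) * (X 0 ^ 2 + X 1 ^ 2)) * Polynomial.X ^ 2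
      + Polynomial.C (C (a ^ 4 - 1)) := by
  have hGa : Ga a = (X 0 ^ 2 + X 1 ^ 2) ^ 2
      + (X 2 ^ 2 + X 3 ^ 2 - C (2 * a ^ 2) * (X 0 ^ 2 + X 1 ^ 2)) + C (a ^ 4 - 1) := by
    simp only [Ga, map_mul, map_sub, map_pow, map_ofNat, map_one]
    ring
  rw [hGa, map_add, map_add, (isHomogeneous_X_zero_sq_add_X_one_sq.pow 2).scaleVars_eq,
    (((isHomogeneous_X_pow _ 2).add (isHomogeneous_X_pow _ 2)).sub
      (isHomogeneous_X_zero_sq_add_X_one_sq.C_mul _)).scaleVars_eq,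
    (isHomogeneous_C _ _).scaleVars_eq, pow_zero, mul_one]

lemma coeff_scaleVars_Ga_zero : (scaleVars (Ga a)).coeff 0 = C (a ^ 4 - 1) := by
  simp only [scaleVars_Ga, Polynomial.coeff_add, Polynomial.coeff_C_mul_X_pow,
    Polynomial.coeff_C_zero, OfNat.zero_ne_ofNat, ite_false, zero_add]

lemma coeff_scaleVars_Ga_four : (scaleVars (Ga a)).coeff 4 = (X 0 ^ 2 + X 1 ^ 2) ^ 2 := by
  simp only [scaleVars_Ga, Polynomial.coeff_add, Polynomial.coeff_C_mul_X_pow, Polynomial.coeff_C,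
    OfNat.ofNat_ne_zero, ite_true, ite_false, add_zero, Nat.reduceEqDiff]

lemma scaleVars_chi_Ga (hP₁ : P₁.IsHomogeneous n) (hP₂ : P₂.IsHomogeneous n)
    (hP₃ : P₃.IsHomogeneous n) : scaleVars (chi ![P₁, P₂, P₃, 0] (Ga a)) =
    Polynomial.C (C 4 * (X 0 ^ 2 + X 1 ^ 2) * (X 0 * P₁ + X 1 * P₂)) * Polynomial.X ^ (n + 1 + 2)
      + Polynomial.C (C 2 * X 2 * P₃ - C (4 * a ^ 2) * (X 0 * P₁ + X 1 * P₂))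
        * Polynomial.X ^ (n + 1) := by
  have hL : (X 0 * P₁ + X 1 * P₂).IsHomogeneous (n + 1) := by
    rw [add_comm n]
    exact ((isHomogeneous_X ℝ 0).mul hP₁).add ((isHomogeneous_X ℝ 1).mul hP₂)
  have hW : (C 2 * X 2 * P₃ - C (4 * a ^ 2) * (X 0 * P₁ + X 1 * P₂)).IsHomogeneous (n + 1) := by
    refine IsHomogeneous.sub ?_ (hL.C_mul _)
    rw [mul_assoc, add_comm n]
    exact ((isHomogeneous_X ℝ 2).mul hP₃).C_mul 2
  have hchi : chi ![P₁, P₂, P₃, 0] (Ga a) = C 4 * (X 0 ^ 2 + X 1 ^ 2) * (X 0 * P₁ + X 1 * P₂)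
      + (C 2 * X 2 * P₃ - C (4 * a ^ 2) * (X 0 * P₁ + X 1 * P₂)) := by
    simp [chi, Ga, Fin.sum_univ_four, pderiv_X, Pi.single_apply, map_ofNat]
    ring
  rw [hchi, map_add, ((isHomogeneous_X_zero_sq_add_X_one_sq.C_mul 4).mul hL).scaleVars_eq,
    hW.scaleVars_eq, add_comm 2]

end

theorem stmt_9 (a : ℝ) (ha : 1 < a) (n : ℕ) :
    ¬ ∃ P₁ P₂ P₃ : MvPolynomial (Fin 4) ℝ,
      P₁ ≠ 0 ∧ P₂ ≠ 0 ∧ P₃ ≠ 0 ∧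
      P₁.IsHomogeneous n ∧ P₂.IsHomogeneous n ∧ P₃.IsHomogeneous n ∧
      ∃ K : MvPolynomial (Fin 4) ℝ, chi ![P₁, P₂, P₃, 0] (Ga a) = K * Ga a := by
  rintro ⟨P₁, P₂, P₃, -, -, hP₃, hhP₁, hhP₂, hhP₃, K, hK⟩
  have hS : (X 0 ^ 2 + X 1 ^ 2 : MvPolynomial (Fin 4) ℝ) ≠ 0 := fun h => by
    simpa using congrArg (eval fun i => if i = 0 then (1 : ℝ) else 0) h
  have hGa₀ : (scaleVars (Ga a)).coeff 0 ≠ 0 := by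
    rw [coeff_scaleVars_Ga_zero]
    exact C_ne_zero.mpr (sub_ne_zero.mpr (one_lt_pow₀ ha four_ne_zero).ne')
  have hGa₄ : 2 < (scaleVars (Ga a)).natDegree :=
    (by norm_num : 2 < 4).trans_le <| Polynomial.le_natDegree_of_ne_zero <| by
      rw [coeff_scaleVars_Ga_four]
      exact pow_ne_zero 2 hS
  obtain ⟨hA, hW⟩ := Polynomial.eq_zero_and_eq_zero_of_mul_eq_C_mul_X_pow_add two_pos hGa₀ hGa₄
    (by rw [← map_mul, ← hK, scaleVars_chi_Ga a hhP₁ hhP₂ hhP₃])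
  have hL : X 0 * P₁ + X 1 * P₂ = 0 := by simpa [hS] using hA
  simp [hL, X_ne_zero, hP₃] at hW
end

section
/- Let P₁, P₂, P₃, P₄ ∈ ℝ[x₁,x₂,x₃,x₄] be nonzero homogeneous polynomials with deg Pᵢ = mᵢ for 1 ≤ i ≤ 4, and assume G_a = (x₁²+x₂²−a²)² + x₃² + x₄² − 1 is a first integral of χ = (P₁,P₂,P₃,P₄), i.e., χG_a = 0. Then: (a) if m₁ ≠ m₂, then max(m₁,m₂) = min(m₁,m₂) + 2 and {m₃,m₄} = {max(m₁,m₂)+2, min(m₁,m₂)}; (b) if m₁ = m₂, then either m₃ = m₄ or {m₃,m₄} = {m₁, m₁+2}. -/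
open MvPolynomial

/-- If six homogeneous polynomials sum to zero and the first is nonzero, its degree must
coincide with the degree of one of the others (else its homogeneous component survives). -/
theorem key1 (f1 f2 f3 f4 f5 f6 : MvPolynomial (Fin 4) ℝ) (d1 d2 d3 d4 d5 d6 : ℕ)
    (h1 : f1.IsHomogeneous d1) (h2 : f2.IsHomogeneous d2) (h3 : f3.IsHomogeneous d3)
    (h4 : f4.IsHomogeneous d4) (h5 : f5.IsHomogeneous d5) (h6 : f6.IsHomogeneous d6)
    (hsum : f1 + f2 + f3 + f4 + f5 + f6 = 0) (hf1 : f1 ≠ 0) :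
    d1 = d2 ∨ d1 = d3 ∨ d1 = d4 ∨ d1 = d5 ∨ d1 = d6 := by
  by_contra hcon
  push_neg at hcon
  obtain ⟨n2, n3, n4, n5, n6⟩ := hcon
  apply hf1
  have h := congrArg (homogeneousComponent d1) hsum
  rw [map_add, map_add, map_add, map_add, map_add, map_zero,
    homogeneousComponent_of_mem (by simpa using h1),
    homogeneousComponent_of_mem (by simpa using h2),
    homogeneousComponent_of_mem (by simpa using h3),
    homogeneousComponent_of_mem (by simpa using h4),
    homogeneousComponent_of_mem (by simpa using h5),
    homogeneousComponent_of_mem (by simpa using h6)] at h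
  simpa [n2, n3, n4, n5, n6] using h

set_option maxHeartbeats 1000000 in
theorem stmt_10 (a : ℝ) (ha : 1 < a) (P : Fin 4 → MvPolynomial (Fin 4) ℝ)
    (m : Fin 4 → ℕ) (hne : ∀ i, P i ≠ 0) (hhom : ∀ i, (P i).IsHomogeneous (m i))
    (hfi : chi P (Ga a) = 0) :
    (m 0 ≠ m 1 →
      max (m 0) (m 1) = min (m 0) (m 1) + 2 ∧
      ({m 2, m 3} : Finset ℕ) = {max (m 0) (m 1) + 2, min (m 0) (m 1)}) ∧
    (m 0 = m 1 →
      m 2 = m 3 ∨ ({m 2, m 3} : Finset ℕ) = {m 0, m 0 + 2}) := by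
  set S : MvPolynomial (Fin 4) ℝ := X 0 ^ 2 + X 1 ^ 2 with hS
  set c : MvPolynomial (Fin 4) ℝ := C (a ^ 2) with hc
  set f1 : MvPolynomial (Fin 4) ℝ := 4 * (X 0 * (P 0 * S)) with hf1
  set f2 : MvPolynomial (Fin 4) ℝ := 4 * (X 1 * (P 1 * S)) with hf2
  set f3 : MvPolynomial (Fin 4) ℝ := -(4 * (c * (X 0 * P 0))) with hf3
  set f4 : MvPolynomial (Fin 4) ℝ := -(4 * (c * (X 1 * P 1))) with hf4
  set f5 : MvPolynomial (Fin 4) ℝ := 2 * (X 2 * P 2) with hf5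
  set f6 : MvPolynomial (Fin 4) ℝ := 2 * (X 3 * P 3) with hf6
  -- derivatives of Ga
  have hp0 : pderiv (0 : Fin 4) (Ga a) = 4 * X 0 * (X 0 ^ 2 + X 1 ^ 2 - C (a^2)) := by
    simp [Ga, pderiv_X_self, pderiv_X_of_ne]; ring
  have hp1 : pderiv (1 : Fin 4) (Ga a) = 4 * X 1 * (X 0 ^ 2 + X 1 ^ 2 - C (a^2)) := by
    simp [Ga, pderiv_X_self, pderiv_X_of_ne]; ring
  have hp2 : pderiv (2 : Fin 4) (Ga a) = 2 * X 2 := by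
    simp [Ga, pderiv_X_self, pderiv_X_of_ne]
  have hp3 : pderiv (3 : Fin 4) (Ga a) = 2 * X 3 := by
    simp [Ga, pderiv_X_self, pderiv_X_of_ne]
  have hsum : f1 + f2 + f3 + f4 + f5 + f6 = 0 := by
    rw [← hfi, chi, Fin.sum_univ_four, hp0, hp1, hp2, hp3, hf1, hf2, hf3, hf4, hf5, hf6,
      hS, hc]
    ring
  -- homogeneity of the pieces
  have h4c : (4 : MvPolynomial (Fin 4) ℝ).IsHomogeneous 0 :=
    map_ofNat (C : ℝ →+* MvPolynomial (Fin 4) ℝ) 4 ▸ isHomogeneous_C _ (4 : ℝ)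
  have h2c : (2 : MvPolynomial (Fin 4) ℝ).IsHomogeneous 0 :=
    map_ofNat (C : ℝ →+* MvPolynomial (Fin 4) ℝ) 2 ▸ isHomogeneous_C _ (2 : ℝ)
  have hSh : S.IsHomogeneous 2 := ((isHomogeneous_X _ _).pow 2).add ((isHomogeneous_X _ _).pow 2)
  have h1 : f1.IsHomogeneous (m 0 + 3) :=
    (show (0:ℕ) + (1 + (m 0 + 2)) = m 0 + 3 by omega) ▸
      h4c.mul ((isHomogeneous_X _ _).mul ((hhom 0).mul hSh))
  have h2 : f2.IsHomogeneous (m 1 + 3) :=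
    (show (0:ℕ) + (1 + (m 1 + 2)) = m 1 + 3 by omega) ▸
      h4c.mul ((isHomogeneous_X _ _).mul ((hhom 1).mul hSh))
  have h3 : f3.IsHomogeneous (m 0 + 1) :=
    ((show (0:ℕ) + (0 + (1 + m 0)) = m 0 + 1 by omega) ▸
      h4c.mul ((isHomogeneous_C _ _).mul ((isHomogeneous_X _ _).mul (hhom 0)))).neg
  have h4 : f4.IsHomogeneous (m 1 + 1) :=
    ((show (0:ℕ) + (0 + (1 + m 1)) = m 1 + 1 by omega) ▸
      h4c.mul ((isHomogeneous_C _ _).mul ((isHomogeneous_X _ _).mul (hhom 1)))).neg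
  have h5 : f5.IsHomogeneous (m 2 + 1) :=
    (show (0:ℕ) + (1 + m 2) = m 2 + 1 by omega) ▸
      h2c.mul ((isHomogeneous_X _ _).mul (hhom 2))
  have h6 : f6.IsHomogeneous (m 3 + 1) :=
    (show (0:ℕ) + (1 + m 3) = m 3 + 1 by omega) ▸
      h2c.mul ((isHomogeneous_X _ _).mul (hhom 3))
  -- nonvanishing of the pieces
  have hR4 : (4 : MvPolynomial (Fin 4) ℝ) ≠ 0 := by
    rw [← map_ofNat (C : ℝ →+* MvPolynomial (Fin 4) ℝ) 4, Ne, C_eq_zero]; norm_num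
  have hR2 : (2 : MvPolynomial (Fin 4) ℝ) ≠ 0 := by
    rw [← map_ofNat (C : ℝ →+* MvPolynomial (Fin 4) ℝ) 2, Ne, C_eq_zero]; norm_num
  have hSne : S ≠ 0 := by
    intro h
    have := congrArg (eval (fun _ => (1:ℝ))) h
    simp [hS] at this
  have hcne : c ≠ 0 := by
    rw [hc, Ne, C_eq_zero]
    positivity
  have n1 : f1 ≠ 0 := mul_ne_zero hR4 (mul_ne_zero (X_ne_zero _) (mul_ne_zero (hne 0) hSne))
  have n2 : f2 ≠ 0 := mul_ne_zero hR4 (mul_ne_zero (X_ne_zero _) (mul_ne_zero (hne 1) hSne))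
  have n3 : f3 ≠ 0 := neg_ne_zero.2 <|
    mul_ne_zero hR4 (mul_ne_zero hcne (mul_ne_zero (X_ne_zero _) (hne 0)))
  have n4 : f4 ≠ 0 := neg_ne_zero.2 <|
    mul_ne_zero hR4 (mul_ne_zero hcne (mul_ne_zero (X_ne_zero _) (hne 1)))
  have n5 : f5 ≠ 0 := mul_ne_zero hR2 (mul_ne_zero (X_ne_zero _) (hne 2))
  have n6 : f6 ≠ 0 := mul_ne_zero hR2 (mul_ne_zero (X_ne_zero _) (hne 3))
  -- degree coincidences
  have H1 := key1 f1 f2 f3 f4 f5 f6 _ _ _ _ _ _ h1 h2 h3 h4 h5 h6 hsum n1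
  have H2 := key1 f2 f1 f3 f4 f5 f6 _ _ _ _ _ _ h2 h1 h3 h4 h5 h6
    (by linear_combination hsum) n2
  have H3 := key1 f3 f1 f2 f4 f5 f6 _ _ _ _ _ _ h3 h1 h2 h4 h5 h6
    (by linear_combination hsum) n3
  have H4 := key1 f4 f1 f2 f3 f5 f6 _ _ _ _ _ _ h4 h1 h2 h3 h5 h6
    (by linear_combination hsum) n4
  have H5 := key1 f5 f1 f2 f3 f4 f6 _ _ _ _ _ _ h5 h1 h2 h3 h4 h6
    (by linear_combination hsum) n5
  have H6 := key1 f6 f1 f2 f3 f4 f5 _ _ _ _ _ _ h6 h1 h2 h3 h4 h5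
    (by linear_combination hsum) n6
  -- arithmetic core
  have core : (m 0 ≠ m 1 →
      max (m 0) (m 1) = min (m 0) (m 1) + 2 ∧
      ((m 2 = max (m 0) (m 1) + 2 ∧ m 3 = min (m 0) (m 1)) ∨
       (m 2 = min (m 0) (m 1) ∧ m 3 = max (m 0) (m 1) + 2))) ∧
      (m 0 = m 1 → m 2 = m 3 ∨ (m 2 = m 0 ∧ m 3 = m 0 + 2) ∨
        (m 2 = m 0 + 2 ∧ m 3 = m 0)) := by
    omega
  constructor
  · intro hne01
    obtain ⟨he, hcs⟩ := core.1 hne01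
    refine ⟨he, ?_⟩
    rcases hcs with ⟨e2, e3⟩ | ⟨e2, e3⟩
    · rw [e2, e3]
    · rw [e2, e3, Finset.pair_comm]
  · intro heq
    rcases core.2 heq with h | ⟨e2, e3⟩ | ⟨e2, e3⟩
    · exact Or.inl h
    · exact Or.inr (by rw [e2, e3])
    · exact Or.inr (by rw [e2, e3, Finset.pair_comm])
end

section
/- Let n ∈ ℕ, n ≥ 1, let i, j, k be distinct indices in {1,2,3,4}, and let Q₁, Q₂, Q₃ ∈ ℝ[x₁,x₂,x₃,x₄] be nonzero polynomials such that Q₁·xᵢⁿ + Q₂·xⱼⁿ + Q₃·x_kⁿ is the zero polynomial. Then there exist polynomials A, B, C ∈ ℝ[x₁,x₂,x₃,x₄] such that Q₁ = A·xⱼⁿ + B·x_kⁿ, Q₂ = −A·xᵢⁿ + C·x_kⁿ and Q₃ = −B·xᵢⁿ − C·xⱼⁿ. -/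
open MvPolynomial

/-!
Membership in a monomial ideal is decided monomial by monomial, so multiplying by a power of a
variable that occurs in none of the generators cannot create membership. Hence
`Q₁ * X i ^ n ∈ (X j ^ n, X k ^ n)` gives `Q₁ = A * X j ^ n + B * X k ^ n`; substituting,
`X k ^ n` divides `(Q₂ + A * X i ^ n) * X j ^ n` and therefore `Q₂ + A * X i ^ n`, and `Q₃` is
then determined by cancelling `X k ^ n`.
-/

namespace MvPolynomial

variable {σ R : Type*} [CommSemiring R]

theorem mem_span_monomial_of_mul_X_pow_mem {S : Set (σ →₀ ℕ)} {p : MvPolynomial σ R} {i : σ}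
    {n : ℕ} (hS : ∀ s ∈ S, s i = 0)
    (hp : p * X i ^ n ∈ Ideal.span ((fun s => monomial s (1 : R)) '' S)) :
    p ∈ Ideal.span ((fun s => monomial s (1 : R)) '' S) := by
  rw [mem_ideal_span_monomial_image] at hp ⊢
  intro m hm
  have hm' : m + Finsupp.single i n ∈ (p * X i ^ n).support := by
    rwa [X_pow_eq_monomial, mem_support_iff, coeff_mul_monomial, mul_one, ← mem_support_iff]
  obtain ⟨s, hs, hle⟩ := hp _ hm'
  refine ⟨s, hs, fun v => ?_⟩
  rcases eq_or_ne v i with rfl | hv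
  · simp [hS s hs]
  · simpa [Finsupp.single_apply, hv.symm] using hle v

theorem mem_span_X_pow_pair_of_mul_X_pow_mem {p : MvPolynomial σ R} {i j k : σ} {a b n : ℕ}
    (hij : i ≠ j) (hik : i ≠ k) (hp : p * X i ^ n ∈ Ideal.span {X j ^ a, X k ^ b}) :
    p ∈ Ideal.span {X j ^ a, X k ^ b} := by
  have hspan : ({X j ^ a, X k ^ b} : Set (MvPolynomial σ R)) =
      (fun s => monomial s 1) '' {Finsupp.single j a, Finsupp.single k b} := by
    simp only [Set.image_pair, X_pow_eq_monomial]
  rw [hspan] at hp ⊢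
  refine mem_span_monomial_of_mul_X_pow_mem ?_ hp
  rintro s (rfl | rfl)
  exacts [Finsupp.single_eq_of_ne hij, Finsupp.single_eq_of_ne hik]

theorem X_pow_dvd_of_dvd_mul_X_pow {p : MvPolynomial σ R} {i k : σ} {m n : ℕ} (hik : i ≠ k)
    (h : X k ^ m ∣ p * X i ^ n) : X k ^ m ∣ p := by
  simpa only [Set.pair_eq_singleton, Ideal.mem_span_singleton] using
    mem_span_X_pow_pair_of_mul_X_pow_mem hik hik (a := m) (b := m) (n := n)
      (by simpa only [Set.pair_eq_singleton, Ideal.mem_span_singleton] using h)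

end MvPolynomial

theorem stmt_12_general (n : ℕ) (i j k : Fin 4)
    (hij : i ≠ j) (hik : i ≠ k) (hjk : j ≠ k)
    (Q₁ Q₂ Q₃ : MvPolynomial (Fin 4) ℝ)
    (h : Q₁ * X i ^ n + Q₂ * X j ^ n + Q₃ * X k ^ n = 0) :
    ∃ A B C' : MvPolynomial (Fin 4) ℝ,
      Q₁ = A * X j ^ n + B * X k ^ n ∧
      Q₂ = -A * X i ^ n + C' * X k ^ n ∧
      Q₃ = -B * X i ^ n - C' * X j ^ n := by
  obtain ⟨A, B, hQ₁⟩ : ∃ A B, A * X j ^ n + B * X k ^ n = Q₁ := by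
    refine Ideal.mem_span_pair.mp (mem_span_X_pow_pair_of_mul_X_pow_mem (n := n) hij hik ?_)
    exact Ideal.mem_span_pair.mpr ⟨-Q₂, -Q₃, by linear_combination -h⟩
  obtain ⟨C', hC'⟩ : X k ^ n ∣ Q₂ + A * X i ^ n := by
    refine X_pow_dvd_of_dvd_mul_X_pow (n := n) hjk ⟨-(Q₃ + B * X i ^ n), ?_⟩
    linear_combination h + X i ^ n * hQ₁
  refine ⟨A, B, C', hQ₁.symm, by linear_combination hC', ?_⟩
  refine mul_right_cancel₀ (pow_ne_zero n (X_ne_zero k)) ?_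
  linear_combination h + X i ^ n * hQ₁ - X j ^ n * hC'

theorem stmt_12 (n : ℕ) (hn : 1 ≤ n) (i j k : Fin 4)
    (hij : i ≠ j) (hik : i ≠ k) (hjk : j ≠ k)
    (Q₁ Q₂ Q₃ : MvPolynomial (Fin 4) ℝ)
    (h₁ : Q₁ ≠ 0) (h₂ : Q₂ ≠ 0) (h₃ : Q₃ ≠ 0)
    (h : Q₁ * X i ^ n + Q₂ * X j ^ n + Q₃ * X k ^ n = 0) :
    ∃ A B C' : MvPolynomial (Fin 4) ℝ,
      Q₁ = A * X j ^ n + B * X k ^ n ∧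
      Q₂ = -A * X i ^ n + C' * X k ^ n ∧
      Q₃ = -B * X i ^ n - C' * X j ^ n :=
  stmt_12_general n i j k hij hik hjk Q₁ Q₂ Q₃ h
end
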